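/- arXiv:2403.06366 — 12 statements merged into one kernel-verified Lean document; each statement's English description precedes it below -/
import Mathlib

section
/- Let A be a finite nonempty set with |A| elements and let β > 0. For every v : A → ℝ, one has max_{a∈A} v(a) − log(|A|)/β ≤ (∑_{a∈A} v(a)·exp(β·v(a)))/(∑_{a∈A} exp(β·v(a))) ≤ max_{a∈A} v(a). -/
open Real Finset

lemma boltz_key (b : ℝ) (hb : 0 < b) (s : ℝ) :
    s * Real.exp (-(b * s)) ≤ 1 / (b * Real.exp 1) := by
  have h1 : b * s ≤ Real.exp (b * s - 1) := by
    linarith [Real.add_one_le_exp (b * s - 1)]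
  have h2 : b * s * Real.exp (-(b * s)) ≤ Real.exp (b * s - 1) * Real.exp (-(b * s)) :=
    mul_le_mul_of_nonneg_right h1 (Real.exp_pos _).le
  rw [← Real.exp_add] at h2
  have h3 : b * s - 1 + -(b * s) = -1 := by ring
  rw [h3] at h2
  have h6 := mul_le_mul_of_nonneg_right h2 (Real.exp_pos 1).le
  have h7 : Real.exp (-1) * Real.exp 1 = 1 := by
    rw [← Real.exp_add]; norm_num
  rw [le_div_iff₀ (mul_pos hb (Real.exp_pos 1))]
  nlinarith [h6, h7]

lemma boltz_card (n : ℕ) (hn : 1 ≤ n) :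
    ((n : ℝ) - 1) / (n * Real.exp 1) ≤ Real.log n := by
  rcases eq_or_lt_of_le hn with h | h
  · simp [← h]
  · have h2 : (2 : ℕ) ≤ n := h
    have hn2 : (2 : ℝ) ≤ (n : ℝ) := by exact_mod_cast h2
    have he : (2 : ℝ) < Real.exp 1 := by linarith [Real.exp_one_gt_d9]
    have hlog2 : (1:ℝ)/2 < Real.log 2 := by linarith [Real.log_two_gt_d9]
    have hlogn : Real.log 2 ≤ Real.log n := Real.log_le_log (by norm_num) hn2
    have hne : (0:ℝ) < (n : ℝ) * Real.exp 1 := by positivity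
    rw [div_le_iff₀ hne]
    nlinarith [Real.exp_pos 1]

/-- **Boltzmann operator bounds.** For a finite nonempty set `A`, `β > 0`, and `v : A → ℝ`,
`max_a v(a) − log|A|/β ≤ (∑_a v(a)·exp(β·v(a)))/(∑_a exp(β·v(a))) ≤ max_a v(a)`. -/
theorem boltzmann_operator_bounds {A : Type*} [Fintype A] [Nonempty A]
    (β : ℝ) (hβ : 0 < β) (v : A → ℝ) :
    Finset.univ.sup' Finset.univ_nonempty v - Real.log (Fintype.card A) / β ≤
        (∑ a, v a * Real.exp (β * v a)) / (∑ a, Real.exp (β * v a)) ∧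
    (∑ a, v a * Real.exp (β * v a)) / (∑ a, Real.exp (β * v a)) ≤
        Finset.univ.sup' Finset.univ_nonempty v := by
  classical
  set M := Finset.univ.sup' Finset.univ_nonempty v with hM
  set n := Fintype.card A with hn
  have hn1 : 1 ≤ n := Fintype.card_pos
  have hnR : (0:ℝ) < (n:ℝ) := by exact_mod_cast hn1
  have hZ : (0:ℝ) < ∑ a, Real.exp (β * v a) :=
    Finset.sum_pos (fun a _ => Real.exp_pos _) Finset.univ_nonempty
  set c := Real.log n / β with hc
  constructor
  · rw [le_div_iff₀ hZ]
    obtain ⟨a₀, -, ha₀⟩ := Finset.exists_mem_eq_sup' Finset.univ_nonempty v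
    have hkey : ∑ a, (M - c - v a) * Real.exp (β * v a) ≤ 0 := by
      have hbound : ∀ a : A, (M - c - v a) * Real.exp (β * v a) ≤
          Real.exp (β * M) / ((n : ℝ) * β * Real.exp 1) := by
        intro a
        have h1 : Real.exp (β * v a) =
            Real.exp (β * (M - c)) * Real.exp (-(β * (M - c - v a))) := by
          rw [← Real.exp_add]; ring_nf
        have h2 := boltz_key β hβ (M - c - v a)
        have h3 : (M - c - v a) * Real.exp (β * v a) ≤
            Real.exp (β * (M - c)) * (1 / (β * Real.exp 1)) := by
          rw [h1]
          calc (M - c - v a) * (Real.exp (β * (M - c)) * Real.exp (-(β * (M - c - v a))))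
              = Real.exp (β * (M - c)) * ((M - c - v a) * Real.exp (-(β * (M - c - v a)))) := by ring
            _ ≤ Real.exp (β * (M - c)) * (1 / (β * Real.exp 1)) :=
                mul_le_mul_of_nonneg_left h2 (Real.exp_pos _).le
        have h4 : Real.exp (β * (M - c)) = Real.exp (β * M) / n := by
          rw [mul_sub, Real.exp_sub]
          congr 1
          rw [hc]
          rw [mul_div_cancel₀ _ hβ.ne', Real.exp_log hnR]
        rw [h4] at h3
        calc (M - c - v a) * Real.exp (β * v a) ≤ Real.exp (β * M) / n * (1 / (β * Real.exp 1)) := h3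
          _ = Real.exp (β * M) / ((n : ℝ) * β * Real.exp 1) := by
              field_simp
      have hsplit : ∑ a, (M - c - v a) * Real.exp (β * v a) =
          (M - c - v a₀) * Real.exp (β * v a₀) +
          ∑ a ∈ Finset.univ.erase a₀, (M - c - v a) * Real.exp (β * v a) :=
        (Finset.add_sum_erase _ _ (Finset.mem_univ a₀)).symm
      have hterm0 : (M - c - v a₀) * Real.exp (β * v a₀) = -c * Real.exp (β * M) := by
        rw [← ha₀]; ring
      have hrest : ∑ a ∈ Finset.univ.erase a₀, (M - c - v a) * Real.exp (β * v a) ≤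
          ((n : ℝ) - 1) * (Real.exp (β * M) / ((n : ℝ) * β * Real.exp 1)) := by
        calc ∑ a ∈ Finset.univ.erase a₀, (M - c - v a) * Real.exp (β * v a)
            ≤ ∑ _a ∈ Finset.univ.erase a₀, Real.exp (β * M) / ((n : ℝ) * β * Real.exp 1) :=
              Finset.sum_le_sum (fun a _ => hbound a)
          _ = ((n : ℝ) - 1) * (Real.exp (β * M) / ((n : ℝ) * β * Real.exp 1)) := by
              rw [Finset.sum_const, Finset.card_erase_of_mem (Finset.mem_univ a₀),
                Finset.card_univ, ← hn, nsmul_eq_mul]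
              push_cast [Nat.cast_sub hn1]
              ring
      have hcard := boltz_card n hn1
      have hE : (0:ℝ) < Real.exp (β * M) := Real.exp_pos _
      rw [hsplit, hterm0]
      have : ((n : ℝ) - 1) * (Real.exp (β * M) / ((n : ℝ) * β * Real.exp 1)) ≤
          c * Real.exp (β * M) := by
        have h6 : ((n:ℝ) - 1) * (Real.exp (β * M) / ((n:ℝ) * β * Real.exp 1)) =
            (((n:ℝ) - 1) / ((n:ℝ) * Real.exp 1)) * (Real.exp (β * M) / β) := by
          field_simp [hβ.ne', hnR.ne']
        have h7 : c * Real.exp (β * M) = Real.log n * (Real.exp (β * M) / β) := by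
          rw [hc]; field_simp
        rw [h6, h7]
        exact mul_le_mul_of_nonneg_right hcard (div_nonneg hE.le hβ.le)
      linarith
    have hexpand : ∑ a, (M - c - v a) * Real.exp (β * v a) =
        (M - c) * ∑ a, Real.exp (β * v a) - ∑ a, v a * Real.exp (β * v a) := by
      rw [Finset.mul_sum, ← Finset.sum_sub_distrib]
      exact Finset.sum_congr rfl (fun a _ => by ring)
    linarith [hexpand ▸ hkey]
  · rw [div_le_iff₀ hZ]
    calc ∑ a, v a * Real.exp (β * v a) ≤ ∑ a, M * Real.exp (β * v a) :=
        Finset.sum_le_sum (fun a _ =>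
          mul_le_mul_of_nonneg_right (Finset.le_sup' v (Finset.mem_univ a)) (Real.exp_pos _).le)
      _ = M * ∑ a, Real.exp (β * v a) := (Finset.mul_sum _ _ _).symm
end

section
/- Let n and m be positive integers, α ∈ (0,1), and γ ∈ [0,1). Let P be an n×m real matrix and Π an m×n real matrix, both with nonnegative entries and with every row summing to 1. Let D be the n×n diagonal matrix with diagonal entries d_1,…,d_n ∈ (0,1), and set d_min := min_i d_i. Then the ℓ∞ operator norm (maximum absolute row sum) of the matrix I + α·(γ·D·P·Π − D) is at most 1 − α·d_min·(1−γ). -/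
/-- **ℓ∞ operator-norm bound for the switching-system matrix.**
For `α ∈ (0,1)`, `γ ∈ [0,1)`, row-stochastic nonnegative matrices `P` (n×m) and `Π` (m×n),
and a diagonal matrix `D = diagonal d` with `d_i ∈ (0,1)`, the maximum absolute row sum of
`I + α·(γ·D·P·Π − D)` is at most `1 − α·d_min·(1−γ)`. -/
theorem linfty_norm_switching_matrix_bound (n m : ℕ) (hn : 0 < n) (hm : 0 < m)
    (α γ : ℝ) (hα : α ∈ Set.Ioo (0 : ℝ) 1) (hγ : γ ∈ Set.Ico (0 : ℝ) 1)
    (P : Matrix (Fin n) (Fin m) ℝ) (Pi : Matrix (Fin m) (Fin n) ℝ)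
    (hP0 : ∀ i j, 0 ≤ P i j) (hP1 : ∀ i, ∑ j, P i j = 1)
    (hPi0 : ∀ i j, 0 ≤ Pi i j) (hPi1 : ∀ i, ∑ j, Pi i j = 1)
    (d : Fin n → ℝ) (hd : ∀ i, d i ∈ Set.Ioo (0 : ℝ) 1) :
    Finset.univ.sup'
        (Finset.univ_nonempty_iff.mpr (Fin.pos_iff_nonempty.mp hn))
        (fun i =>
          ∑ j, |((1 : Matrix (Fin n) (Fin n) ℝ)
            + α • (γ • (Matrix.diagonal d * P * Pi) - Matrix.diagonal d)) i j|) ≤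
      1 - α * (Finset.univ.inf'
        (Finset.univ_nonempty_iff.mpr (Fin.pos_iff_nonempty.mp hn)) d) * (1 - γ) := by
  obtain ⟨hα0, hα1⟩ := hα
  obtain ⟨hγ0, hγ1⟩ := hγ
  set Q : Matrix (Fin n) (Fin n) ℝ := P * Pi with hQ
  have hQ0 : ∀ i j, 0 ≤ Q i j := by
    intro i j
    rw [hQ, Matrix.mul_apply]
    exact Finset.sum_nonneg fun k _ => mul_nonneg (hP0 i k) (hPi0 k j)
  have hQ1 : ∀ i, ∑ j, Q i j = 1 := by
    intro i
    simp only [hQ, Matrix.mul_apply]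
    rw [Finset.sum_comm]
    simp only [← Finset.mul_sum, hPi1, mul_one]
    exact hP1 i
  apply Finset.sup'_le
  intro i _
  have hdi := hd i
  have hentry : ∀ j, ((1 : Matrix (Fin n) (Fin n) ℝ)
      + α • (γ • (Matrix.diagonal d * P * Pi) - Matrix.diagonal d)) i j
      = (if i = j then 1 - α * d i else 0) + α * γ * (d i * Q i j) := by
    intro j
    have : Matrix.diagonal d * P * Pi = Matrix.diagonal d * Q := by
      rw [hQ, Matrix.mul_assoc]
    rw [this]
    simp only [Matrix.add_apply, Matrix.smul_apply, Matrix.sub_apply, Matrix.one_apply,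
      Matrix.diagonal_mul, Matrix.diagonal_apply, smul_eq_mul]
    by_cases h : i = j <;> simp [h] <;> ring
  have hnn : ∀ j, 0 ≤ ((1 : Matrix (Fin n) (Fin n) ℝ)
      + α • (γ • (Matrix.diagonal d * P * Pi) - Matrix.diagonal d)) i j := by
    intro j
    rw [hentry j]
    have h1 : 0 ≤ α * γ * (d i * Q i j) :=
      mul_nonneg (mul_nonneg hα0.le hγ0) (mul_nonneg hdi.1.le (hQ0 i j))
    have h2 : (0:ℝ) ≤ if i = j then 1 - α * d i else 0 := by
      split
      · nlinarith [hdi.2, hα1]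
      · exact le_refl 0
    linarith
  have hsum : ∑ j, |((1 : Matrix (Fin n) (Fin n) ℝ)
      + α • (γ • (Matrix.diagonal d * P * Pi) - Matrix.diagonal d)) i j|
      = 1 - α * d i * (1 - γ) := by
    rw [Finset.sum_congr rfl fun j _ => abs_of_nonneg (hnn j)]
    rw [Finset.sum_congr rfl fun j _ => hentry j]
    rw [Finset.sum_add_distrib, Finset.sum_ite_eq Finset.univ i (fun _ => 1 - α * d i)]
    rw [← Finset.mul_sum, ← Finset.mul_sum, hQ1 i]
    simp
    ring
  rw [hsum]
  have hinf : Finset.univ.inf'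
      (Finset.univ_nonempty_iff.mpr (Fin.pos_iff_nonempty.mp hn)) d ≤ d i :=
    Finset.inf'_le d (Finset.mem_univ i)
  nlinarith [mul_nonneg hα0.le (sub_nonneg.mpr hγ1.le)]
end

section
/- Let S and A be finite nonempty sets, α ∈ (0,1), γ ∈ [0,1), and β > 0. Let (s_k,a_k,s'_k) ∈ S×A×S, k ≥ 0, be arbitrary sequences and let r_k ∈ ℝ satisfy |r_k| ≤ 1 for all k. Let Q_0 : S×A → ℝ satisfy ‖Q_0‖_∞ ≤ 1 and define recursively Q_{k+1}(s,a) = Q_k(s,a) + α·𝟙[(s,a)=(s_k,a_k)]·(r_k + γ·h_LSE^β(Q_k(s'_k,·)) − Q_k(s_k,a_k)). Then for all k ≥ 0, ‖Q_k‖_∞ ≤ (1/(1−γ))·(1 + γ·log(|A|)/β). -/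
theorem aux_step_lse (α γ M E x rk : ℝ) (hα0 : 0 < α) (hα1 : α < 1)
    (hxl : -M ≤ x) (hxu : x ≤ M)
    (key1 : 0 ≤ M - rk - γ * E) (key2 : 0 ≤ rk + γ * E + M) :
    |x + α * 1 * (rk + γ * E - x)| ≤ M := by
  rw [abs_le]
  constructor
  · nlinarith [mul_nonneg (by linarith : (0:ℝ) ≤ 1 - α) (by linarith : 0 ≤ x + M),
      mul_nonneg hα0.le key2]
  · nlinarith [mul_nonneg (by linarith : (0:ℝ) ≤ 1 - α) (by linarith : 0 ≤ M - x),
      mul_nonneg hα0.le key1]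

/-- **Boundedness of LSE soft Q-learning iterates.** With step size `α ∈ (0,1)`,
discount `γ ∈ [0,1)`, parameter `β > 0`, unit-bounded rewards and unit-bounded
initial iterate, the LSE soft Q-learning iterates satisfy
`‖Q_k‖_∞ ≤ (1/(1−γ))·(1 + γ·log|A|/β)` for all `k`. -/
theorem lse_soft_q_iterates_bounded {S A : Type*} [Fintype S] [Fintype A]
    [Nonempty S] [Nonempty A] [DecidableEq S] [DecidableEq A]
    (α γ β : ℝ) (hα : α ∈ Set.Ioo (0 : ℝ) 1) (hγ : γ ∈ Set.Ico (0 : ℝ) 1) (hβ : 0 < β)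
    (sk : ℕ → S) (ak : ℕ → A) (sk' : ℕ → S)
    (r : ℕ → ℝ) (hr : ∀ k, |r k| ≤ 1)
    (Q : ℕ → S → A → ℝ) (hQ0 : ∀ s a, |Q 0 s a| ≤ 1)
    (hrec : ∀ k s a, Q (k + 1) s a = Q k s a +
      α * (if (s, a) = (sk k, ak k) then (1 : ℝ) else 0) *
        (r k + γ * ((1 / β) * Real.log (∑ b, Real.exp (β * Q k (sk' k) b)))
          - Q k (sk k) (ak k))) :
    ∀ k s a, |Q k s a| ≤ (1 / (1 - γ)) * (1 + γ * Real.log (Fintype.card A) / β) := by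
  obtain ⟨hα0, hα1⟩ := hα
  obtain ⟨hγ0, hγ1⟩ := hγ
  set L := Real.log (Fintype.card A) with hLdef
  have hcA : (1:ℝ) ≤ (Fintype.card A : ℝ) := by exact_mod_cast Fintype.card_pos
  have hL0 : 0 ≤ L := Real.log_nonneg hcA
  have h1γ : 0 < 1 - γ := by linarith
  set M := (1/(1-γ)) * (1 + γ * L / β) with hMdef
  have hMeq : (1 - γ) * M = 1 + γ * L / β := by
    rw [hMdef]; field_simp
  set D := L / β with hDdef
  have hD0 : 0 ≤ D := div_nonneg hL0 hβ.le
  have hMeqD : (1 - γ) * M = 1 + γ * D := by rw [hMeq, hDdef]; ring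
  have hM1 : 1 ≤ M := by nlinarith
  clear_value M
  clear_value D
  intro k
  induction k with
  | zero => intro s a; exact (hQ0 s a).trans hM1
  | succ k ih =>
    intro s a
    -- bound on the LSE term
    set E := (1 / β) * Real.log (∑ b, Real.exp (β * Q k (sk' k) b)) with hEdef
    have hE : |E| ≤ M + D := by
      have hsumpos : 0 < ∑ b, Real.exp (β * Q k (sk' k) b) :=
        Finset.sum_pos (fun b _ => Real.exp_pos _) Finset.univ_nonempty
      have hsumle : (∑ b, Real.exp (β * Q k (sk' k) b))
          ≤ (Fintype.card A : ℝ) * Real.exp (β * M) := by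
        calc (∑ b, Real.exp (β * Q k (sk' k) b))
            ≤ ∑ _b : A, Real.exp (β * M) := by
              apply Finset.sum_le_sum
              intro b _
              apply Real.exp_le_exp.mpr
              have := (abs_le.mp (ih (sk' k) b)).2
              nlinarith
          _ = (Fintype.card A : ℝ) * Real.exp (β * M) := by
              simp [Finset.sum_const, nsmul_eq_mul]
      obtain ⟨b0⟩ := (inferInstance : Nonempty A)
      have hsumge : Real.exp (β * (-M)) ≤ ∑ b, Real.exp (β * Q k (sk' k) b) := by
        have h1 : Real.exp (β * (-M)) ≤ Real.exp (β * Q k (sk' k) b0) := by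
          apply Real.exp_le_exp.mpr
          have := (abs_le.mp (ih (sk' k) b0)).1
          nlinarith
        exact h1.trans (Finset.single_le_sum
          (f := fun b => Real.exp (β * Q k (sk' k) b))
          (fun b _ => (Real.exp_pos _).le) (Finset.mem_univ b0))
      have hlogup : Real.log (∑ b, Real.exp (β * Q k (sk' k) b)) ≤ L + β * M := by
        have := Real.log_le_log hsumpos hsumle
        rwa [Real.log_mul (by positivity) (Real.exp_ne_zero _), Real.log_exp] at this
      have hlogdn : -(β * M) ≤ Real.log (∑ b, Real.exp (β * Q k (sk' k) b)) := by
        have := Real.log_le_log (Real.exp_pos _) hsumge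
        rw [Real.log_exp] at this
        linarith
      rw [abs_le]
      constructor
      · rw [hEdef]
        have h2 : (1/β) * (-(β*M)) ≤ (1/β) * Real.log (∑ b, Real.exp (β * Q k (sk' k) b)) :=
          mul_le_mul_of_nonneg_left hlogdn (by positivity)
        have h3 : (1/β) * (-(β*M)) = -M := by field_simp
        linarith
      · rw [hEdef]
        have h2 : (1/β) * Real.log (∑ b, Real.exp (β * Q k (sk' k) b)) ≤ (1/β) * (L + β*M) :=
          mul_le_mul_of_nonneg_left hlogup (by positivity)
        have h3 : (1/β) * (L + β*M) = M + D := by rw [hDdef]; field_simp; ring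
        linarith
    have hEb := abs_le.mp hE
    have hx := abs_le.mp (ih (sk k) (ak k))
    have hrk := abs_le.mp (hr k)
    rw [hrec k s a, ← hEdef]
    clear_value E
    by_cases h : (s, a) = (sk k, ak k)
    · rw [Prod.mk.injEq] at h
      obtain ⟨hs, ha⟩ := h
      subst hs; subst ha
      rw [if_pos rfl]
      have hgE1 : γ * E ≤ γ * (M + D) := mul_le_mul_of_nonneg_left hEb.2 hγ0
      have hgE2 : γ * (-(M + D)) ≤ γ * E := mul_le_mul_of_nonneg_left hEb.1 hγ0
      have key1 : 0 ≤ M - r k - γ * E := by nlinarith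
      have key2 : 0 ≤ r k + γ * E + M := by nlinarith
      exact aux_step_lse α γ M E _ (r k) hα0 hα1 hx.1 hx.2 key1 key2
    · rw [if_neg h]
      simpa using ih s a
end

section
/- Let S and A be finite nonempty sets, α ∈ (0,1), γ ∈ [0,1), and β > 0. Let (s_k,a_k,s'_k) ∈ S×A×S, k ≥ 0, be arbitrary sequences and let r_k ∈ ℝ satisfy |r_k| ≤ 1 for all k. Let Q_0 : S×A → ℝ satisfy ‖Q_0‖_∞ ≤ 1 and define recursively Q_{k+1}(s,a) = Q_k(s,a) + α·𝟙[(s,a)=(s_k,a_k)]·(r_k + γ·h_Boltz^β(Q_k(s'_k,·)) − Q_k(s_k,a_k)). Then for all k ≥ 0, ‖Q_k‖_∞ ≤ (1/(1−γ))·(1 + γ·log(|A|)/β). -/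
/-! The Boltzmann operator is an average of the entries of `v` with positive weights, so it never
exceeds `max_a |v a|`. Hence, as long as `‖Q_k‖_∞ ≤ M`, the target `r_k + γ·h_Boltz^β(Q_k(s'_k,·))`
is bounded by `1 + γ M`, and the update replaces one entry by a convex combination of itself and
the target. Any `M ≥ 1` with `1 + γ M ≤ M` is therefore an invariant bound; the claimed constant
`(1 + γ log|A| / β) / (1 - γ)` is such an `M`. -/

open Finset Real

noncomputable def boltzmann {A : Type*} [Fintype A] (β : ℝ) (v : A → ℝ) : ℝ :=
  (∑ b, v b * exp (β * v b)) / ∑ b, exp (β * v b)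

theorem abs_sum_mul_div_sum_le {ι : Type*} (s : Finset ι) {v w : ι → ℝ} {M : ℝ} (hM : 0 ≤ M)
    (hv : ∀ i ∈ s, |v i| ≤ M) (hw : ∀ i ∈ s, 0 ≤ w i) :
    |(∑ i ∈ s, v i * w i) / ∑ i ∈ s, w i| ≤ M := by
  have hsum : 0 ≤ ∑ i ∈ s, w i := sum_nonneg hw
  rw [abs_div, abs_of_nonneg hsum]
  refine div_le_of_le_mul₀ hsum hM ?_
  calc |∑ i ∈ s, v i * w i| ≤ ∑ i ∈ s, |v i| * w i := by
        refine (abs_sum_le_sum_abs _ _).trans_eq (sum_congr rfl fun i hi => ?_)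
        rw [abs_mul, abs_of_nonneg (hw i hi)]
    _ ≤ ∑ i ∈ s, M * w i := sum_le_sum fun i hi => mul_le_mul_of_nonneg_right (hv i hi) (hw i hi)
    _ = M * ∑ i ∈ s, w i := (mul_sum _ _ _).symm

theorem abs_boltzmann_le {A : Type*} [Fintype A] (β : ℝ) {v : A → ℝ} {M : ℝ} (hM : 0 ≤ M)
    (hv : ∀ b, |v b| ≤ M) : |boltzmann β v| ≤ M :=
  abs_sum_mul_div_sum_le univ hM (fun b _ => hv b) fun _ _ => (exp_pos _).le

theorem abs_add_mul_sub_le {q t α M : ℝ} (hq : |q| ≤ M) (ht : |t| ≤ M) (hα : α ∈ Set.Icc 0 1) :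
    |q + α * (t - q)| ≤ M := by
  simp only [abs_le, ← Set.mem_Icc] at hq ht ⊢
  exact (convex_Icc (-M) M).add_smul_sub_mem hq ht hα

theorem one_add_mul_le_of_sub_mul_eq {γ c M : ℝ} (hγ : 0 ≤ γ) (hc : 0 ≤ c) (hM : 0 ≤ M)
    (hMγ : M * (1 - γ) = 1 + c) : 1 ≤ M ∧ 1 + γ * M ≤ M := by
  constructor <;> nlinarith [mul_nonneg hγ hM]

theorem boltzmann_soft_q_iterates_bounded_general {S A : Type*} [Fintype A]
    [DecidableEq S] [DecidableEq A]
    (α γ β : ℝ) (hα : α ∈ Set.Ioo (0 : ℝ) 1) (hγ : γ ∈ Set.Ico (0 : ℝ) 1) (hβ : 0 < β)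
    (sk : ℕ → S) (ak : ℕ → A) (sk' : ℕ → S)
    (r : ℕ → ℝ) (hr : ∀ k, |r k| ≤ 1)
    (Q : ℕ → S → A → ℝ) (hQ0 : ∀ s a, |Q 0 s a| ≤ 1)
    (hrec : ∀ k s a, Q (k + 1) s a = Q k s a +
      α * (if (s, a) = (sk k, ak k) then (1 : ℝ) else 0) *
        (r k + γ * ((∑ b, Q k (sk' k) b * Real.exp (β * Q k (sk' k) b)) /
            (∑ b, Real.exp (β * Q k (sk' k) b)))
          - Q k (sk k) (ak k))) :
    ∀ k s a, |Q k s a| ≤ (1 / (1 - γ)) * (1 + γ * Real.log (Fintype.card A) / β) := by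
  set M := (1 / (1 - γ)) * (1 + γ * Real.log (Fintype.card A) / β)
  have hc : 0 ≤ γ * Real.log (Fintype.card A) / β :=
    div_nonneg (mul_nonneg hγ.1 (log_natCast_nonneg _)) hβ.le
  have hM0 : 0 ≤ M := mul_nonneg (by simp [hγ.2.le]) (by linarith)
  obtain ⟨hM1, hMγ⟩ := one_add_mul_le_of_sub_mul_eq hγ.1 hc hM0
    (by simp only [M]; field_simp [(sub_pos.2 hγ.2).ne'])
  intro k
  induction k with
  | zero => exact fun s a => (hQ0 s a).trans hM1
  | succ k ih =>
    intro s a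
    rw [hrec]
    by_cases hsa : (s, a) = (sk k, ak k)
    · obtain ⟨rfl, rfl⟩ := Prod.ext_iff.1 hsa
      have htarget : |r k + γ * boltzmann β (Q k (sk' k))| ≤ M :=
        calc |r k + γ * boltzmann β (Q k (sk' k))|
            ≤ |r k| + γ * |boltzmann β (Q k (sk' k))| :=
              (abs_add_le _ _).trans_eq (by rw [abs_mul, abs_of_nonneg hγ.1])
          _ ≤ 1 + γ * M :=
              add_le_add (hr k) (mul_le_mul_of_nonneg_left (abs_boltzmann_le β hM0 (ih _)) hγ.1)
          _ ≤ M := hMγ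
      rw [if_pos rfl, mul_one]
      exact abs_add_mul_sub_le (ih _ _) htarget (Set.Ioo_subset_Icc_self hα)
    · rw [if_neg hsa, mul_zero, zero_mul, add_zero]
      exact ih s a

/-- **Boundedness of Boltzmann soft Q-learning iterates.** With step size `α ∈ (0,1)`,
discount `γ ∈ [0,1)`, parameter `β > 0`, unit-bounded rewards and unit-bounded
initial iterate, the Boltzmann soft Q-learning iterates satisfy
`‖Q_k‖_∞ ≤ (1/(1−γ))·(1 + γ·log|A|/β)` for all `k`. -/
theorem boltzmann_soft_q_iterates_bounded {S A : Type*} [Fintype S] [Fintype A]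
    [Nonempty S] [Nonempty A] [DecidableEq S] [DecidableEq A]
    (α γ β : ℝ) (hα : α ∈ Set.Ioo (0 : ℝ) 1) (hγ : γ ∈ Set.Ico (0 : ℝ) 1) (hβ : 0 < β)
    (sk : ℕ → S) (ak : ℕ → A) (sk' : ℕ → S)
    (r : ℕ → ℝ) (hr : ∀ k, |r k| ≤ 1)
    (Q : ℕ → S → A → ℝ) (hQ0 : ∀ s a, |Q 0 s a| ≤ 1)
    (hrec : ∀ k s a, Q (k + 1) s a = Q k s a +
      α * (if (s, a) = (sk k, ak k) then (1 : ℝ) else 0) *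
        (r k + γ * ((∑ b, Q k (sk' k) b * Real.exp (β * Q k (sk' k) b)) /
            (∑ b, Real.exp (β * Q k (sk' k) b)))
          - Q k (sk k) (ak k))) :
    ∀ k s a, |Q k s a| ≤ (1 / (1 - γ)) * (1 + γ * Real.log (Fintype.card A) / β) :=
  boltzmann_soft_q_iterates_bounded_general α γ β hα hγ hβ sk ak sk' r hr Q hQ0 hrec
end

section
/- In the deterministic comparison setting below, suppose Q_0^L(s,a) ≤ Q_0^{LSE}(s,a) for all (s,a) ∈ S×A. Then for all k ≥ 0 and all (s,a), Q_k^L(s,a) ≤ Q_k^{LSE}(s,a). -/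
/-- **Lower comparison system of LSE soft Q-learning.** If the lower comparison
iterates start below the LSE soft Q-learning iterates, they stay below forever. -/
theorem lse_lower_comparison {S A : Type*} [Fintype S] [Fintype A]
    [Nonempty S] [Nonempty A]
    (α γ β : ℝ) (hα : α ∈ Set.Ioo (0 : ℝ) 1) (hγ : γ ∈ Set.Ico (0 : ℝ) 1) (hβ : 0 < β)
    (P : S → A → S → ℝ) (hP0 : ∀ s a s', 0 ≤ P s a s') (hP1 : ∀ s a, ∑ s', P s a s' = 1)
    (R : S → A → ℝ)
    (Qstar : S → A → ℝ)
    (hBell : ∀ s a, Qstar s a = R s a + γ * ∑ s', P s a s' *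
      (Finset.univ.sup' Finset.univ_nonempty fun b => Qstar s' b))
    (d : S → A → ℝ) (hd : ∀ s a, d s a ∈ Set.Ioo (0 : ℝ) 1)
    (pi : S → A)
    (hpi : ∀ s, Qstar s (pi s) = Finset.univ.sup' Finset.univ_nonempty fun b => Qstar s b)
    (w : ℕ → S → A → ℝ)
    (QLSE : ℕ → S → A → ℝ)
    (hLSErec : ∀ k s a, QLSE (k + 1) s a = QLSE k s a +
      α * (d s a * (R s a
          + γ * ∑ s', P s a s' * ((1 / β) * Real.log (∑ b, Real.exp (β * QLSE k s' b)))
          - QLSE k s a)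
        + w k s a))
    (QL : ℕ → S → A → ℝ)
    (hLrec : ∀ k s a, QL (k + 1) s a = QL k s a +
      α * (γ * d s a * ∑ s', P s a s' * (QL k s' (pi s') - Qstar s' (pi s'))
        - d s a * (QL k s a - Qstar s a) + w k s a))
    (h0 : ∀ s a, QL 0 s a ≤ QLSE 0 s a) :
    ∀ k s a, QL k s a ≤ QLSE k s a := by
  obtain ⟨hα0, hα1⟩ := hα
  obtain ⟨hγ0, hγ1⟩ := hγ
  intro k
  induction k with
  | zero => exact h0
  | succ k ih =>
    intro s a
    obtain ⟨hd0, hd1⟩ := hd s a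
    -- Bellman with greedy policy
    have hBell' : R s a = Qstar s a - γ * ∑ s', P s a s' * Qstar s' (pi s') := by
      have := hBell s a
      have hsum : (∑ s', P s a s' *
          (Finset.univ.sup' Finset.univ_nonempty fun b => Qstar s' b))
          = ∑ s', P s a s' * Qstar s' (pi s') := by
        refine Finset.sum_congr rfl fun s' _ => ?_
        rw [hpi s']
      rw [hsum] at this
      linarith
    -- the log-sum-exp dominates QL at the greedy action
    have hterm : ∀ s', QL k s' (pi s') ≤
        (1 / β) * Real.log (∑ b, Real.exp (β * QLSE k s' b)) := by
      intro s'
      have hSpos : 0 < ∑ b, Real.exp (β * QLSE k s' b) :=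
        Finset.sum_pos (fun b _ => Real.exp_pos _) Finset.univ_nonempty
      have hone : Real.exp (β * QLSE k s' (pi s')) ≤ ∑ b, Real.exp (β * QLSE k s' b) :=
        Finset.single_le_sum (f := fun b => Real.exp (β * QLSE k s' b))
          (fun b _ => (Real.exp_pos _).le) (Finset.mem_univ (pi s'))
      have hlog : β * QLSE k s' (pi s') ≤ Real.log (∑ b, Real.exp (β * QLSE k s' b)) :=
        (Real.le_log_iff_exp_le hSpos).mpr hone
      have h2 : QLSE k s' (pi s') ≤ (Real.log (∑ b, Real.exp (β * QLSE k s' b))) / β :=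
        (le_div_iff₀ hβ).mpr (by linarith)
      have h3 : (Real.log (∑ b, Real.exp (β * QLSE k s' b))) / β
          = (1 / β) * Real.log (∑ b, Real.exp (β * QLSE k s' b)) := by ring
      have := ih s' (pi s')
      linarith
    have hsumpos : 0 ≤ ∑ s', P s a s' *
        ((1 / β) * Real.log (∑ b, Real.exp (β * QLSE k s' b)) - QL k s' (pi s')) :=
      Finset.sum_nonneg fun s' _ => mul_nonneg (hP0 s a s') (by linarith [hterm s'])
    have hid : (∑ s', P s a s' * ((1 / β) * Real.log (∑ b, Real.exp (β * QLSE k s' b))))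
        - (∑ s', P s a s' * (QL k s' (pi s') - Qstar s' (pi s')))
        - (∑ s', P s a s' * Qstar s' (pi s'))
        = ∑ s', P s a s' *
          ((1 / β) * Real.log (∑ b, Real.exp (β * QLSE k s' b)) - QL k s' (pi s')) := by
      rw [← Finset.sum_sub_distrib, ← Finset.sum_sub_distrib]
      exact Finset.sum_congr rfl fun s' _ => by ring
    have h1 : 0 ≤ (1 - α * d s a) * (QLSE k s a - QL k s a) := by
      have : α * d s a < 1 := by nlinarith
      have := ih s a
      nlinarith
    have h3 : 0 ≤ α * (γ * (d s a *
        ((∑ s', P s a s' * ((1 / β) * Real.log (∑ b, Real.exp (β * QLSE k s' b))))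
        - (∑ s', P s a s' * (QL k s' (pi s') - Qstar s' (pi s')))
        - (∑ s', P s a s' * Qstar s' (pi s'))))) := by
      rw [hid]
      exact mul_nonneg hα0.le (mul_nonneg hγ0 (mul_nonneg hd0.le hsumpos))
    rw [hLSErec, hLrec, hBell']
    nlinarith [h1, h3]
end

section
/- In the deterministic comparison setting below, suppose Q_0^U(s,a) ≥ Q_0^{LSE}(s,a) for all (s,a) ∈ S×A. Then for all k ≥ 0 and all (s,a), Q_k^U(s,a) ≥ Q_k^{LSE}(s,a). -/
/-- **Upper comparison system of LSE soft Q-learning.** If the upper comparison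
iterates start above the LSE soft Q-learning iterates, they stay above forever. -/
theorem lse_upper_comparison {S A : Type*} [Fintype S] [Fintype A]
    [Nonempty S] [Nonempty A]
    (α γ β : ℝ) (hα : α ∈ Set.Ioo (0 : ℝ) 1) (hγ : γ ∈ Set.Ico (0 : ℝ) 1) (hβ : 0 < β)
    (P : S → A → S → ℝ) (hP0 : ∀ s a s', 0 ≤ P s a s') (hP1 : ∀ s a, ∑ s', P s a s' = 1)
    (R : S → A → ℝ)
    (Qstar : S → A → ℝ)
    (hBell : ∀ s a, Qstar s a = R s a + γ * ∑ s', P s a s' *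
      (Finset.univ.sup' Finset.univ_nonempty fun b => Qstar s' b))
    (d : S → A → ℝ) (hd : ∀ s a, d s a ∈ Set.Ioo (0 : ℝ) 1)
    (w : ℕ → S → A → ℝ)
    (QLSE : ℕ → S → A → ℝ)
    (hLSErec : ∀ k s a, QLSE (k + 1) s a = QLSE k s a +
      α * (d s a * (R s a
          + γ * ∑ s', P s a s' * ((1 / β) * Real.log (∑ b, Real.exp (β * QLSE k s' b)))
          - QLSE k s a)
        + w k s a))
    (pi : ℕ → S → A)
    (hpi : ∀ k s, QLSE k s (pi k s) = Finset.univ.sup' Finset.univ_nonempty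
      fun b => QLSE k s b)
    (QU : ℕ → S → A → ℝ)
    (hUrec : ∀ k s a, QU (k + 1) s a = QU k s a +
      α * (γ * d s a * ∑ s', P s a s' * (QU k s' (pi k s') - Qstar s' (pi k s'))
        - d s a * (QU k s a - Qstar s a) + w k s a
        + γ * d s a * Real.log (Fintype.card A) / β))
    (h0 : ∀ s a, QLSE 0 s a ≤ QU 0 s a) :
    ∀ k s a, QLSE k s a ≤ QU k s a := by
  intro k
  induction k with
  | zero => exact h0
  | succ k ih =>
    intro s a
    have hd1 := (hd s a).1
    have hd2 := (hd s a).2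
    have hcard : (1:ℝ) ≤ Fintype.card A := by
      exact_mod_cast Fintype.card_pos (α := A)
    -- per-state key bound
    have key : ∀ s' : S,
        (1 / β) * Real.log (∑ b, Real.exp (β * QLSE k s' b)) ≤
        (Finset.univ.sup' Finset.univ_nonempty fun b => Qstar s' b)
        + (QU k s' (pi k s') - Qstar s' (pi k s'))
        + Real.log (Fintype.card A) / β := by
      intro s'
      set M := Finset.univ.sup' Finset.univ_nonempty fun b => QLSE k s' b with hM
      have hsum : (∑ b, Real.exp (β * QLSE k s' b)) ≤
          (Fintype.card A : ℝ) * Real.exp (β * M) := by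
        calc (∑ b, Real.exp (β * QLSE k s' b)) ≤ ∑ _b : A, Real.exp (β * M) := by
              apply Finset.sum_le_sum
              intro b _
              have hb : QLSE k s' b ≤ M := Finset.le_sup' _ (Finset.mem_univ b)
              exact Real.exp_le_exp.mpr (by nlinarith)
          _ = (Fintype.card A : ℝ) * Real.exp (β * M) := by
              simp [Finset.sum_const, Finset.card_univ]
      have hpos : (0:ℝ) < ∑ b, Real.exp (β * QLSE k s' b) :=
        Finset.sum_pos (fun b _ => Real.exp_pos _) Finset.univ_nonempty
      have hlog : Real.log (∑ b, Real.exp (β * QLSE k s' b)) ≤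
          Real.log (Fintype.card A) + β * M := by
        calc Real.log (∑ b, Real.exp (β * QLSE k s' b)) ≤
              Real.log ((Fintype.card A : ℝ) * Real.exp (β * M)) := by
              exact Real.log_le_log hpos hsum
          _ = Real.log (Fintype.card A) + β * M := by
              rw [Real.log_mul (by positivity) (Real.exp_ne_zero _), Real.log_exp]
      have hdiv : (1 / β) * Real.log (∑ b, Real.exp (β * QLSE k s' b)) ≤
          (1 / β) * (Real.log (Fintype.card A) + β * M) :=
        mul_le_mul_of_nonneg_left hlog (by positivity)
      have heq : (1 / β) * (Real.log (Fintype.card A) + β * M)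
          = M + Real.log (Fintype.card A) / β := by
        field_simp; ring
      have hMQ : M ≤ QU k s' (pi k s') := by
        have := ih s' (pi k s')
        rw [hpi k s'] at this
        rw [hM]; exact this
      have hQstar : Qstar s' (pi k s') ≤
          Finset.univ.sup' Finset.univ_nonempty fun b => Qstar s' b :=
        Finset.le_sup' _ (Finset.mem_univ _)
      linarith
    -- sum the key bound
    have sumkey : (∑ s', P s a s' *
          ((1 / β) * Real.log (∑ b, Real.exp (β * QLSE k s' b)))) ≤
        ∑ s', P s a s' *
          ((Finset.univ.sup' Finset.univ_nonempty fun b => Qstar s' b)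
            + (QU k s' (pi k s') - Qstar s' (pi k s'))
            + Real.log (Fintype.card A) / β) :=
      Finset.sum_le_sum fun s' _ =>
        mul_le_mul_of_nonneg_left (key s') (hP0 s a s')
    have expand : (∑ s', P s a s' *
          ((Finset.univ.sup' Finset.univ_nonempty fun b => Qstar s' b)
            + (QU k s' (pi k s') - Qstar s' (pi k s'))
            + Real.log (Fintype.card A) / β))
        = (∑ s', P s a s' *
            (Finset.univ.sup' Finset.univ_nonempty fun b => Qstar s' b))
          + (∑ s', P s a s' * (QU k s' (pi k s') - Qstar s' (pi k s')))
          + Real.log (Fintype.card A) / β := by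
      simp only [mul_add, Finset.sum_add_distrib]
      rw [← Finset.sum_mul, hP1 s a, one_mul]
    have h1 : 0 ≤ (1 - α * d s a) * (QU k s a - QLSE k s a) :=
      mul_nonneg (by nlinarith [hα.1, hα.2]) (by linarith [ih s a])
    have h2 : 0 ≤ α * (γ * d s a) *
        (((∑ s', P s a s' *
            (Finset.univ.sup' Finset.univ_nonempty fun b => Qstar s' b))
          + (∑ s', P s a s' * (QU k s' (pi k s') - Qstar s' (pi k s')))
          + Real.log (Fintype.card A) / β)
          - ∑ s', P s a s' *
            ((1 / β) * Real.log (∑ b, Real.exp (β * QLSE k s' b)))) := by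
      apply mul_nonneg
      · have := hγ.1; have := hα.1; positivity
      · linarith [sumkey, expand ▸ sumkey]
    rw [hLSErec k s a, hUrec k s a, hBell s a]
    set SL := ∑ s', P s a s' *
      ((1 / β) * Real.log (∑ b, Real.exp (β * QLSE k s' b))) with hSL
    set SM := ∑ s', P s a s' *
      (Finset.univ.sup' Finset.univ_nonempty fun b => Qstar s' b) with hSM
    set SD := ∑ s', P s a s' * (QU k s' (pi k s') - Qstar s' (pi k s')) with hSD
    have final : QU k s a + α * (γ * d s a * SD
          - d s a * (QU k s a - (R s a + γ * SM)) + w k s a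
          + γ * d s a * Real.log (Fintype.card A) / β)
        - (QLSE k s a + α * (d s a * (R s a + γ * SL - QLSE k s a) + w k s a))
        = (1 - α * d s a) * (QU k s a - QLSE k s a)
          + α * (γ * d s a) * (SM + SD + Real.log (Fintype.card A) / β - SL) := by
      ring
    linarith [h1, h2, final]
end

section
/- In the deterministic comparison setting below, suppose Q_0^L(s,a) ≤ Q_0^{Boltz}(s,a) for all (s,a) ∈ S×A. Then for all k ≥ 0 and all (s,a), Q_k^L(s,a) ≤ Q_k^{Boltz}(s,a). -/
/-!
By Jensen's inequality for `log`, the Boltzmann average of `v` is at least `max v - log |A| / β`;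
since `π*` is greedy for `Q*`, this makes the expected next-state term of the lower system a lower
bound for that of the Boltzmann iteration. The gap `Q_k^Boltz - Q_k^L` is then carried to the next
step with the factor `1 - α d ≥ 0`, plus a nonnegative term, so it stays nonnegative.
-/

open Finset Real

section Boltzmann

variable {A : Type*} [Fintype A]

noncomputable def boltzmannAvg (β : ℝ) (v : A → ℝ) : ℝ :=
  (∑ b, v b * exp (β * v b)) / ∑ b, exp (β * v b)

variable [Nonempty A]

theorem mul_sup'_le_log_sum_exp (β : ℝ) (v : A → ℝ) :
    β * univ.sup' univ_nonempty v ≤ log (∑ b, exp (β * v b)) := by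
  obtain ⟨b₀, -, hb₀⟩ := exists_mem_eq_sup' (univ_nonempty (α := A)) v
  rw [hb₀, le_log_iff_exp_le (sum_pos (fun b _ => exp_pos _) univ_nonempty)]
  exact single_le_sum (f := fun b => exp (β * v b)) (fun b _ => (exp_pos _).le) (mem_univ b₀)

/-- The left-hand side is the entropy of the softmax weights `exp (β * v b) / ∑ exp (β * v)`. -/
theorem log_sum_exp_sub_mul_boltzmannAvg_le (β : ℝ) (v : A → ℝ) :
    log (∑ b, exp (β * v b)) - β * boltzmannAvg β v ≤ log (Fintype.card A) := by
  set Z := ∑ b, exp (β * v b) with hZdef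
  have hZ : 0 < Z := sum_pos (fun b _ => exp_pos _) univ_nonempty
  have hJensen := strictConcaveOn_log_Ioi.concaveOn.le_map_sum (t := univ)
    (w := fun b => exp (β * v b) / Z) (p := fun b => Z / exp (β * v b))
    (fun b _ => (div_pos (exp_pos _) hZ).le)
    (by rw [← sum_div, div_self hZ.ne'])
    (fun b _ => div_pos hZ (exp_pos _))
  have hmean : ∑ b, exp (β * v b) / Z * (β * v b) = β * boltzmannAvg β v := by
    rw [boltzmannAvg, mul_div_assoc', mul_sum, sum_div]
    exact sum_congr rfl fun b _ => by ring
  have hentropy : ∑ b, (exp (β * v b) / Z) • log (Z / exp (β * v b)) =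
      log Z - β * boltzmannAvg β v := by
    simp only [smul_eq_mul, log_div hZ.ne' (exp_pos _).ne', log_exp, mul_sub, sum_sub_distrib,
      ← sum_mul, ← sum_div, ← hZdef, div_self hZ.ne', one_mul, hmean]
  have hcard : ∑ b, (exp (β * v b) / Z) • (Z / exp (β * v b)) = Fintype.card A := by
    simp [hZ.ne']
  rwa [hentropy, hcard] at hJensen

theorem sup'_sub_log_card_div_le_boltzmannAvg {β : ℝ} (hβ : 0 < β) (v : A → ℝ) :
    univ.sup' univ_nonempty v - log (Fintype.card A) / β ≤ boltzmannAvg β v := by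
  refine le_of_mul_le_mul_left ?_ hβ
  rw [mul_sub, mul_div_cancel₀ _ hβ.ne']
  linarith [mul_sup'_le_log_sum_exp β v, log_sum_exp_sub_mul_boltzmannAvg_le β v]

end Boltzmann

theorem sum_mul_sub_le_sum_mul {ι : Type*} [Fintype ι] {p f g : ι → ℝ} {c : ℝ}
    (hp0 : ∀ i, 0 ≤ p i) (hp1 : ∑ i, p i = 1) (hfg : ∀ i, f i - c ≤ g i) :
    ∑ i, p i * f i - c ≤ ∑ i, p i * g i :=
  calc ∑ i, p i * f i - c = ∑ i, p i * (f i - c) := by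
        simp only [mul_sub, sum_sub_distrib, ← sum_mul, hp1, one_mul]
    _ ≤ ∑ i, p i * g i := sum_le_sum fun i _ => mul_le_mul_of_nonneg_left (hfg i) (hp0 i)

theorem lower_update_le_boltzmann_update {qL qB qstar r x y h w α d γ ℓ β : ℝ}
    (hq : qL ≤ qB) (hα : 0 ≤ α) (hd : 0 ≤ d) (hαd : α * d ≤ 1) (hγ : 0 ≤ γ)
    (hstar : qstar = r + γ * y) (hx : x - ℓ / β ≤ h - y) :
    qL + α * (γ * d * x - d * (qL - qstar) + w - γ * d * ℓ / β) ≤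
      qB + α * (d * (r + γ * h - qB) + w) := by
  have hgap : qB + α * (d * (r + γ * h - qB) + w) -
      (qL + α * (γ * d * x - d * (qL - qstar) + w - γ * d * ℓ / β)) =
      (1 - α * d) * (qB - qL) + α * d * γ * (h - y - (x - ℓ / β)) := by
    subst hstar; ring
  have := mul_nonneg (sub_nonneg.2 hαd) (sub_nonneg.2 hq)
  have := mul_nonneg (mul_nonneg (mul_nonneg hα hd) hγ) (sub_nonneg.2 hx)
  linarith

theorem boltzmann_lower_comparison_general {S A : Type*} [Fintype S] [Fintype A]
    [Nonempty A]
    (α γ β : ℝ) (hα : α ∈ Set.Ioo (0 : ℝ) 1) (hγ : γ ∈ Set.Ico (0 : ℝ) 1) (hβ : 0 < β)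
    (P : S → A → S → ℝ) (hP0 : ∀ s a s', 0 ≤ P s a s') (hP1 : ∀ s a, ∑ s', P s a s' = 1)
    (R : S → A → ℝ)
    (Qstar : S → A → ℝ)
    (hBell : ∀ s a, Qstar s a = R s a + γ * ∑ s', P s a s' *
      (Finset.univ.sup' Finset.univ_nonempty fun b => Qstar s' b))
    (d : S → A → ℝ) (hd : ∀ s a, d s a ∈ Set.Ioo (0 : ℝ) 1)
    (pi : S → A)
    (hpi : ∀ s, Qstar s (pi s) = Finset.univ.sup' Finset.univ_nonempty fun b => Qstar s b)
    (w : ℕ → S → A → ℝ)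
    (QB : ℕ → S → A → ℝ)
    (hBrec : ∀ k s a, QB (k + 1) s a = QB k s a +
      α * (d s a * (R s a
          + γ * ∑ s', P s a s' * ((∑ b, QB k s' b * Real.exp (β * QB k s' b)) /
              (∑ b, Real.exp (β * QB k s' b)))
          - QB k s a)
        + w k s a))
    (QL : ℕ → S → A → ℝ)
    (hLrec : ∀ k s a, QL (k + 1) s a = QL k s a +
      α * (γ * d s a * ∑ s', P s a s' * (QL k s' (pi s') - Qstar s' (pi s'))
        - d s a * (QL k s a - Qstar s a) + w k s a
        - γ * d s a * Real.log (Fintype.card A) / β))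
    (h0 : ∀ s a, QL 0 s a ≤ QB 0 s a) :
    ∀ k s a, QL k s a ≤ QB k s a := by
  intro k
  induction k with
  | zero => exact h0
  | succ k ih =>
    intro s a
    obtain ⟨hd0, hd1⟩ := hd s a
    have hgreedy : Qstar s a = R s a + γ * ∑ s', P s a s' * Qstar s' (pi s') := by
      simpa only [← hpi] using hBell s a
    have hnext : ∑ s', P s a s' * (QL k s' (pi s') - Qstar s' (pi s')) - log (Fintype.card A) / β
        ≤ ∑ s', P s a s' * boltzmannAvg β (QB k s') - ∑ s', P s a s' * Qstar s' (pi s') := by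
      rw [← sum_sub_distrib]
      simp_rw [← mul_sub]
      refine sum_mul_sub_le_sum_mul (hP0 s a) (hP1 s a) fun s' => ?_
      have hsoft := sup'_sub_log_card_div_le_boltzmannAvg hβ (QB k s')
      have hsup := (ih s' (pi s')).trans (le_sup' (QB k s') (mem_univ (pi s')))
      linarith
    rw [hBrec, hLrec]
    exact lower_update_le_boltzmann_update (ih s a) hα.1.le hd0.le
      (mul_le_one₀ hα.2.le hd0.le hd1.le) hγ.1 hgreedy hnext

/-- **Lower comparison system of Boltzmann soft Q-learning.** If the lower comparison
iterates start below the Boltzmann soft Q-learning iterates, they stay below forever. -/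
theorem boltzmann_lower_comparison {S A : Type*} [Fintype S] [Fintype A]
    [Nonempty S] [Nonempty A]
    (α γ β : ℝ) (hα : α ∈ Set.Ioo (0 : ℝ) 1) (hγ : γ ∈ Set.Ico (0 : ℝ) 1) (hβ : 0 < β)
    (P : S → A → S → ℝ) (hP0 : ∀ s a s', 0 ≤ P s a s') (hP1 : ∀ s a, ∑ s', P s a s' = 1)
    (R : S → A → ℝ)
    (Qstar : S → A → ℝ)
    (hBell : ∀ s a, Qstar s a = R s a + γ * ∑ s', P s a s' *
      (Finset.univ.sup' Finset.univ_nonempty fun b => Qstar s' b))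
    (d : S → A → ℝ) (hd : ∀ s a, d s a ∈ Set.Ioo (0 : ℝ) 1)
    (pi : S → A)
    (hpi : ∀ s, Qstar s (pi s) = Finset.univ.sup' Finset.univ_nonempty fun b => Qstar s b)
    (w : ℕ → S → A → ℝ)
    (QB : ℕ → S → A → ℝ)
    (hBrec : ∀ k s a, QB (k + 1) s a = QB k s a +
      α * (d s a * (R s a
          + γ * ∑ s', P s a s' * ((∑ b, QB k s' b * Real.exp (β * QB k s' b)) /
              (∑ b, Real.exp (β * QB k s' b)))
          - QB k s a)
        + w k s a))
    (QL : ℕ → S → A → ℝ)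
    (hLrec : ∀ k s a, QL (k + 1) s a = QL k s a +
      α * (γ * d s a * ∑ s', P s a s' * (QL k s' (pi s') - Qstar s' (pi s'))
        - d s a * (QL k s a - Qstar s a) + w k s a
        - γ * d s a * Real.log (Fintype.card A) / β))
    (h0 : ∀ s a, QL 0 s a ≤ QB 0 s a) :
    ∀ k s a, QL k s a ≤ QB k s a :=
  boltzmann_lower_comparison_general α γ β hα hγ hβ P hP0 hP1 R Qstar hBell d hd pi hpi w QB hBrec
    QL hLrec h0
end

section
/- In the deterministic comparison setting below, suppose Q_0^U(s,a) ≥ Q_0^{Boltz}(s,a) for all (s,a) ∈ S×A. Then for all k ≥ 0 and all (s,a), Q_k^U(s,a) ≥ Q_k^{Boltz}(s,a). -/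
/-- Boltzmann softmax average is at most the max. -/
lemma boltz_le_max {A : Type*} [Fintype A] [Nonempty A] (β : ℝ) (f : A → ℝ) :
    (∑ b, f b * Real.exp (β * f b)) / (∑ b, Real.exp (β * f b)) ≤
      Finset.univ.sup' Finset.univ_nonempty f := by
  have hpos : 0 < ∑ b : A, Real.exp (β * f b) :=
    Finset.sum_pos (fun b _ => Real.exp_pos _) Finset.univ_nonempty
  rw [div_le_iff₀ hpos]
  rw [Finset.mul_sum]
  apply Finset.sum_le_sum
  intro b _
  exact mul_le_mul_of_nonneg_right
    (Finset.le_sup' f (Finset.mem_univ b)) (Real.exp_pos _).le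

/-- **Upper comparison system of Boltzmann soft Q-learning.** If the upper comparison
iterates start above the Boltzmann soft Q-learning iterates, they stay above forever. -/
theorem boltzmann_upper_comparison {S A : Type*} [Fintype S] [Fintype A]
    [Nonempty S] [Nonempty A]
    (α γ β : ℝ) (hα : α ∈ Set.Ioo (0 : ℝ) 1) (hγ : γ ∈ Set.Ico (0 : ℝ) 1) (hβ : 0 < β)
    (P : S → A → S → ℝ) (hP0 : ∀ s a s', 0 ≤ P s a s') (hP1 : ∀ s a, ∑ s', P s a s' = 1)
    (R : S → A → ℝ)
    (Qstar : S → A → ℝ)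
    (hBell : ∀ s a, Qstar s a = R s a + γ * ∑ s', P s a s' *
      (Finset.univ.sup' Finset.univ_nonempty fun b => Qstar s' b))
    (d : S → A → ℝ) (hd : ∀ s a, d s a ∈ Set.Ioo (0 : ℝ) 1)
    (w : ℕ → S → A → ℝ)
    (QB : ℕ → S → A → ℝ)
    (hBrec : ∀ k s a, QB (k + 1) s a = QB k s a +
      α * (d s a * (R s a
          + γ * ∑ s', P s a s' * ((∑ b, QB k s' b * Real.exp (β * QB k s' b)) /
              (∑ b, Real.exp (β * QB k s' b)))
          - QB k s a)
        + w k s a))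
    (pi : ℕ → S → A)
    (hpi : ∀ k s, QB k s (pi k s) = Finset.univ.sup' Finset.univ_nonempty
      fun b => QB k s b)
    (QU : ℕ → S → A → ℝ)
    (hUrec : ∀ k s a, QU (k + 1) s a = QU k s a +
      α * (γ * d s a * ∑ s', P s a s' * (QU k s' (pi k s') - Qstar s' (pi k s'))
        - d s a * (QU k s a - Qstar s a) + w k s a))
    (h0 : ∀ s a, QB 0 s a ≤ QU 0 s a) :
    ∀ k s a, QB k s a ≤ QU k s a := by
  intro k
  induction k with
  | zero => exact h0
  | succ k IH =>
    intro s a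
    obtain ⟨hα0, hα1⟩ := hα
    obtain ⟨hγ0, hγ1⟩ := hγ
    obtain ⟨hd0, hd1⟩ := hd s a
    rw [hBrec, hUrec, hBell s a]
    set T1 := ∑ s', P s a s' * ((∑ b, QB k s' b * Real.exp (β * QB k s' b)) /
        (∑ b, Real.exp (β * QB k s' b))) with hT1
    set T2 := ∑ s', P s a s' * (QU k s' (pi k s') - Qstar s' (pi k s')) with hT2
    set T3 := ∑ s', P s a s' *
        (Finset.univ.sup' Finset.univ_nonempty fun b => Qstar s' b) with hT3
    have hsum : T1 ≤ T2 + T3 := by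
      rw [hT2, hT3, ← Finset.sum_add_distrib]
      apply Finset.sum_le_sum
      intro s' _
      rw [← mul_add]
      apply mul_le_mul_of_nonneg_left _ (hP0 s a s')
      have h1 : (∑ b, QB k s' b * Real.exp (β * QB k s' b)) /
          (∑ b, Real.exp (β * QB k s' b)) ≤ QB k s' (pi k s') := by
        rw [hpi k s']; exact boltz_le_max β _
      have h2 : QB k s' (pi k s') ≤ QU k s' (pi k s') := IH s' (pi k s')
      have h3 : Qstar s' (pi k s') ≤
          Finset.univ.sup' Finset.univ_nonempty fun b => Qstar s' b :=
        Finset.le_sup' _ (Finset.mem_univ (pi k s'))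
      linarith
    have hfac1 : 0 ≤ (1 - α * d s a) * (QU k s a - QB k s a) := by
      have : α * d s a < 1 := by nlinarith
      have hIH := IH s a
      nlinarith
    have hfac2 : 0 ≤ α * γ * d s a * (T2 + T3 - T1) := by
      apply mul_nonneg _ (by linarith)
      positivity
    nlinarith [hfac1, hfac2]
end

section
/- In the single-step noise setting below with the LSE operator, let Q : S×A → ℝ satisfy ‖Q‖_∞ ≤ (1/(1−γ))·(1 + γ·log(|A|)/β), and let W := ∑_{(s,a,s')∈S×A×S} d(s,a)·P(s'|s,a)·w(s,a,s')·w(s,a,s')ᵀ be the second-moment matrix of the noise. Then for every x ∈ ℝ^{S×A}, xᵀ·W·x ≤ (6·(log(|A|) + β)²/(β²·(1−γ)²))·‖x‖₂²; equivalently, the maximum eigenvalue of W is at most 6·(log(|A|)+β)²/(β²·(1−γ)²). -/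
/-!
Write `δ(s,a,s') = r(s,a,s') + γ·h_LSE^β(Q(s',·)) − Q(s,a)` for the temporal-difference error.
Then `⟨x, w(s,a,s')⟩ = x(s,a)·δ(s,a,s') − c`, where `c` is the mean of `x(s,a)·δ(s,a,s')`
under `d ⊗ P`, so `xᵀ W x` is a variance and is bounded by the second moment
`E[x(s,a)² δ²] ≤ ‖δ‖_∞² ‖x‖₂²`. Since `max Q ≤ h_LSE^β(Q) ≤ max Q + log |A| / β`, the bound on `Q`
gives `|δ| ≤ 2 (β + γ log |A|) / (β (1 − γ))`.
-/

open Finset Real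

noncomputable def logSumExp {A : Type*} [Fintype A] (β : ℝ) (v : A → ℝ) : ℝ :=
  (1 / β) * log (∑ a, exp (β * v a))

section LogSumExp

variable {A : Type*} [Fintype A] {β : ℝ}

theorem le_logSumExp (hβ : 0 < β) (v : A → ℝ) (a : A) : v a ≤ logSumExp β v := by
  have hpos : 0 < ∑ c, exp (β * v c) := sum_pos (fun c _ => exp_pos _) ⟨a, mem_univ a⟩
  have hle : β * v a ≤ log (∑ c, exp (β * v c)) :=
    (le_log_iff_exp_le hpos).2 <|
      single_le_sum (f := fun c => exp (β * v c)) (fun c _ => (exp_pos _).le) (mem_univ a)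
  rwa [logSumExp, one_div, le_inv_mul_iff₀ hβ]

theorem logSumExp_le [Nonempty A] (hβ : 0 < β) {v : A → ℝ} {M : ℝ} (hv : ∀ a, v a ≤ M) :
    logSumExp β v ≤ M + log (Fintype.card A) / β := by
  have hcard : (0 : ℝ) < Fintype.card A := by exact_mod_cast Fintype.card_pos
  have hsum : ∑ a, exp (β * v a) ≤ Fintype.card A * exp (β * M) :=
    calc ∑ a, exp (β * v a) ≤ ∑ _a : A, exp (β * M) :=
          sum_le_sum fun a _ => exp_le_exp.2 (mul_le_mul_of_nonneg_left (hv a) hβ.le)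
      _ = Fintype.card A * exp (β * M) := by simp
  have hlog : log (∑ a, exp (β * v a)) ≤ log (Fintype.card A) + β * M :=
    calc log (∑ a, exp (β * v a)) ≤ log (Fintype.card A * exp (β * M)) :=
          log_le_log (sum_pos (fun a _ => exp_pos _) univ_nonempty) hsum
      _ = log (Fintype.card A) + β * M := by rw [log_mul hcard.ne' (exp_pos _).ne', log_exp]
  rw [logSumExp, one_div, inv_mul_le_iff₀ hβ, mul_add, mul_div_cancel₀ _ hβ.ne']
  linarith

theorem abs_add_mul_logSumExp_sub_le (hβ : 0 < β) {γ ρ q M : ℝ} {v : A → ℝ} (hγ : 0 ≤ γ)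
    (hρ : |ρ| ≤ 1) (hq : |q| ≤ M) (hv : ∀ a, |v a| ≤ M) (a : A) :
    |ρ + γ * logSumExp β v - q| ≤ 1 + γ * (M + log (Fintype.card A) / β) + M := by
  have : Nonempty A := ⟨a⟩
  have hupper := logSumExp_le hβ fun c => (abs_le.1 (hv c)).2
  have hlower := (abs_le.1 (hv a)).1.trans (le_logSumExp hβ v a)
  have hL : 0 ≤ log (Fintype.card A) / β := div_nonneg (log_natCast_nonneg _) hβ.le
  rw [abs_le] at hρ hq ⊢
  constructor <;> nlinarith

end LogSumExp

theorem sq_one_add_mul_add_le {γ β L M : ℝ} (hγ0 : 0 ≤ γ) (hγ1 : γ < 1) (hβ : 0 < β)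
    (hL : 0 ≤ L) (hM : M = 1 / (1 - γ) * (1 + γ * L / β)) :
    (1 + γ * (M + L / β) + M) ^ 2 ≤ 6 * (L + β) ^ 2 / (β ^ 2 * (1 - γ) ^ 2) := by
  have h1γ : 0 < 1 - γ := by linarith
  have hB : 1 + γ * (M + L / β) + M = 2 * (β + γ * L) / (β * (1 - γ)) := by
    rw [hM]; field_simp; ring
  rw [hB, div_pow, ← mul_pow]
  gcongr ?_ / _
  have hγL : 0 ≤ β + γ * L := by positivity
  nlinarith [mul_le_mul_of_nonneg_right hγ1.le hL]

theorem sum_mul_sub_sum_mul_sq {κ : Type*} [Fintype κ] (μ f : κ → ℝ) (hμ : ∑ k, μ k = 1) :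
    ∑ k, μ k * (f k - ∑ j, μ j * f j) ^ 2 = ∑ k, μ k * f k ^ 2 - (∑ k, μ k * f k) ^ 2 := by
  set c := ∑ j, μ j * f j
  have hexpand : ∀ k, μ k * (f k - c) ^ 2 = μ k * f k ^ 2 - 2 * c * (μ k * f k) + c ^ 2 * μ k :=
    fun k => by ring
  simp only [hexpand, sum_add_distrib, sum_sub_distrib, ← mul_sum, hμ]
  ring

theorem sum_mul_add_mul_sub {Ω : Type*} [Fintype Ω] (P f g : Ω → ℝ) (γ q : ℝ)
    (hP : ∑ ω, P ω = 1) :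
    ∑ ω, P ω * (f ω + γ * g ω - q) = ∑ ω, P ω * f ω + γ * ∑ ω, P ω * g ω - q := by
  have hexpand : ∀ ω, P ω * (f ω + γ * g ω - q) = P ω * f ω + γ * (P ω * g ω) - P ω * q :=
    fun ω => by ring
  simp only [hexpand, sum_sub_distrib, sum_add_distrib, ← mul_sum, ← sum_mul, hP, one_mul]

section CentredNoise

variable {ι Ω : Type*} [Fintype ι] [Fintype Ω] (μ : ι → ℝ) (P δ : ι → Ω → ℝ) (x : ι → ℝ)

theorem second_moment_le_of_abs_le {B : ℝ} (hμ0 : ∀ i, 0 ≤ μ i) (hμ1 : ∑ i, μ i = 1)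
    (hP0 : ∀ i ω, 0 ≤ P i ω) (hP1 : ∀ i, ∑ ω, P i ω = 1) (hδ : ∀ i ω, |δ i ω| ≤ B) :
    ∑ i, ∑ ω, μ i * P i ω * (x i * δ i ω) ^ 2 ≤ B ^ 2 * ∑ i, x i ^ 2 := by
  have hμ_le : ∀ i, μ i ≤ 1 := fun i =>
    hμ1 ▸ single_le_sum (fun j _ => hμ0 j) (mem_univ i)
  have hterm : ∀ i ω, μ i * P i ω * (x i * δ i ω) ^ 2 ≤ P i ω * (B ^ 2 * x i ^ 2) := by
    intro i ω
    have hsq : (x i * δ i ω) ^ 2 ≤ B ^ 2 * x i ^ 2 :=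
      calc (x i * δ i ω) ^ 2 = δ i ω ^ 2 * x i ^ 2 := by ring
        _ ≤ B ^ 2 * x i ^ 2 := mul_le_mul_of_nonneg_right
          (sq_le_sq' (abs_le.1 (hδ i ω)).1 (abs_le.1 (hδ i ω)).2) (sq_nonneg _)
    calc μ i * P i ω * (x i * δ i ω) ^ 2 ≤ P i ω * (x i * δ i ω) ^ 2 :=
          mul_le_mul_of_nonneg_right (mul_le_of_le_one_left (hP0 i ω) (hμ_le i)) (sq_nonneg _)
      _ ≤ P i ω * (B ^ 2 * x i ^ 2) := mul_le_mul_of_nonneg_left hsq (hP0 i ω)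
  calc ∑ i, ∑ ω, μ i * P i ω * (x i * δ i ω) ^ 2
      ≤ ∑ i, ∑ ω, P i ω * (B ^ 2 * x i ^ 2) := sum_le_sum fun i _ => sum_le_sum fun ω _ => hterm i ω
    _ = B ^ 2 * ∑ i, x i ^ 2 := by simp only [← sum_mul, hP1, one_mul, mul_sum]

variable [DecidableEq ι]

/-- For `ι = S × A`, `μ = d`, `Ω = S` and `δ` the TD error this is the noise vector `w(s,a,s')`. -/
def centredNoise (i : ι) (ω : Ω) (j : ι) : ℝ :=
  (if j = i then 1 else 0) * δ i ω - μ j * ∑ ω', P j ω' * δ j ω'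

theorem sum_mul_centredNoise (i : ι) (ω : Ω) :
    ∑ j, x j * centredNoise μ P δ i ω j =
      x i * δ i ω - ∑ j, ∑ ω', μ j * P j ω' * (x j * δ j ω') := by
  simp only [centredNoise, mul_sub, sum_sub_distrib, mul_ite, mul_zero, ite_mul, one_mul,
    zero_mul, sum_ite_eq', mem_univ, if_true, mul_sum]
  congr 1
  exact sum_congr rfl fun j _ => sum_congr rfl fun ω' _ => by ring

theorem centredNoise_second_moment_le_second_moment (hμ : ∑ i, μ i = 1)
    (hP : ∀ i, ∑ ω, P i ω = 1) :
    ∑ i, ∑ ω, μ i * P i ω * (∑ j, x j * centredNoise μ P δ i ω j) ^ 2 ≤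
      ∑ i, ∑ ω, μ i * P i ω * (x i * δ i ω) ^ 2 := by
  have hμP : ∑ k : ι × Ω, μ k.1 * P k.1 k.2 = 1 := by
    simp only [Fintype.sum_prod_type, ← mul_sum, hP, mul_one, hμ]
  have hvar := sum_mul_sub_sum_mul_sq (fun k : ι × Ω => μ k.1 * P k.1 k.2)
    (fun k => x k.1 * δ k.1 k.2) hμP
  simp only [Fintype.sum_prod_type] at hvar
  simp only [sum_mul_centredNoise, hvar]
  linarith [sq_nonneg (∑ i, ∑ ω, μ i * P i ω * (x i * δ i ω))]

end CentredNoise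

theorem lse_noise_second_moment_bound_general {S A : Type*} [Fintype S] [Fintype A]
    [DecidableEq S] [DecidableEq A]
    (γ β : ℝ) (hγ : γ ∈ Set.Ico (0 : ℝ) 1) (hβ : 0 < β)
    (d : S → A → ℝ) (hd0 : ∀ s a, 0 ≤ d s a) (hd1 : ∑ p : S × A, d p.1 p.2 = 1)
    (P : S → A → S → ℝ) (hP0 : ∀ s a s', 0 ≤ P s a s') (hP1 : ∀ s a, ∑ s', P s a s' = 1)
    (r : S → A → S → ℝ) (hr : ∀ s a s', |r s a s'| ≤ 1)
    (Q : S → A → ℝ)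
    (hQ : ∀ s a, |Q s a| ≤ (1 / (1 - γ)) * (1 + γ * Real.log (Fintype.card A) / β))
    (w : S → A → S → S → A → ℝ)
    (hw : ∀ s a s' u b, w s a s' u b =
      (if (u, b) = (s, a) then (1 : ℝ) else 0) *
        (r s a s' + γ * ((1 / β) * Real.log (∑ c, Real.exp (β * Q s' c))) - Q s a)
      - d u b * ((∑ s'', P u b s'' * r u b s'')
          + γ * ∑ s'', P u b s'' * ((1 / β) * Real.log (∑ c, Real.exp (β * Q s'' c)))
          - Q u b)) :
    ∀ x : S × A → ℝ,
      (∑ s, ∑ a, ∑ s', d s a * P s a s' * (∑ p : S × A, x p * w s a s' p.1 p.2) ^ 2) ≤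
        (6 * (Real.log (Fintype.card A) + β) ^ 2 / (β ^ 2 * (1 - γ) ^ 2)) *
          ∑ p : S × A, (x p) ^ 2 := by
  intro x
  obtain ⟨hγ0, hγ1⟩ := hγ
  set L := log (Fintype.card A)
  set M := 1 / (1 - γ) * (1 + γ * L / β) with hM
  set δ : S × A → S → ℝ := fun p s' => r p.1 p.2 s' + γ * logSumExp β (Q s') - Q p.1 p.2
  have hδ : ∀ p s', |δ p s'| ≤ 1 + γ * (M + L / β) + M := fun p s' =>
    abs_add_mul_logSumExp_sub_le hβ hγ0 (hr _ _ _) (hQ _ _) (hQ s') p.2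
  have hw' : ∀ s a s' (q : S × A), w s a s' q.1 q.2 =
      centredNoise (fun p => d p.1 p.2) (fun p => P p.1 p.2) δ (s, a) s' q := by
    intro s a s' q
    rw [hw, centredNoise, sum_mul_add_mul_sub _ _ _ _ _ (hP1 q.1 q.2)]
    rfl
  calc _ = ∑ p : S × A, ∑ s', d p.1 p.2 * P p.1 p.2 s' *
          (∑ q, x q * centredNoise (fun p => d p.1 p.2) (fun p => P p.1 p.2) δ p s' q) ^ 2 := by
        simp only [Fintype.sum_prod_type, hw']
    _ ≤ _ := centredNoise_second_moment_le_second_moment _ _ _ x hd1 (fun p => hP1 p.1 p.2)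
    _ ≤ _ := second_moment_le_of_abs_le _ _ _ x (fun p => hd0 p.1 p.2) hd1
          (fun p => hP0 p.1 p.2) (fun p => hP1 p.1 p.2) hδ
    _ ≤ _ := by
        gcongr
        exact sq_one_add_mul_add_le hγ0 hγ1 hβ (log_natCast_nonneg _) hM

/-- **Second-moment bound of the LSE noise.** If `‖Q‖_∞ ≤ (1/(1−γ))·(1 + γ·log|A|/β)`,
then the second-moment matrix `W = E[w wᵀ]` of the single-step LSE noise satisfies
`xᵀ W x ≤ (6·(log|A|+β)²/(β²·(1−γ)²))·‖x‖₂²` for every `x`, i.e. its maximum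
eigenvalue is at most `6·(log|A|+β)²/(β²·(1−γ)²)`. -/
theorem lse_noise_second_moment_bound {S A : Type*} [Fintype S] [Fintype A]
    [Nonempty S] [Nonempty A] [DecidableEq S] [DecidableEq A]
    (γ β : ℝ) (hγ : γ ∈ Set.Ico (0 : ℝ) 1) (hβ : 0 < β)
    (d : S → A → ℝ) (hd0 : ∀ s a, 0 ≤ d s a) (hd1 : ∑ p : S × A, d p.1 p.2 = 1)
    (P : S → A → S → ℝ) (hP0 : ∀ s a s', 0 ≤ P s a s') (hP1 : ∀ s a, ∑ s', P s a s' = 1)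
    (r : S → A → S → ℝ) (hr : ∀ s a s', |r s a s'| ≤ 1)
    (Q : S → A → ℝ)
    (hQ : ∀ s a, |Q s a| ≤ (1 / (1 - γ)) * (1 + γ * Real.log (Fintype.card A) / β))
    (w : S → A → S → S → A → ℝ)
    (hw : ∀ s a s' u b, w s a s' u b =
      (if (u, b) = (s, a) then (1 : ℝ) else 0) *
        (r s a s' + γ * ((1 / β) * Real.log (∑ c, Real.exp (β * Q s' c))) - Q s a)
      - d u b * ((∑ s'', P u b s'' * r u b s'')
          + γ * ∑ s'', P u b s'' * ((1 / β) * Real.log (∑ c, Real.exp (β * Q s'' c)))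
          - Q u b)) :
    ∀ x : S × A → ℝ,
      (∑ s, ∑ a, ∑ s', d s a * P s a s' * (∑ p : S × A, x p * w s a s' p.1 p.2) ^ 2) ≤
        (6 * (Real.log (Fintype.card A) + β) ^ 2 / (β ^ 2 * (1 - γ) ^ 2)) *
          ∑ p : S × A, (x p) ^ 2 :=
  lse_noise_second_moment_bound_general γ β hγ hβ d hd0 hd1 P hP0 hP1 r hr Q hQ w hw
end

section
/- In the single-step noise setting below with the Boltzmann operator, let Q : S×A → ℝ satisfy ‖Q‖_∞ ≤ (1/(1−γ))·(1 + γ·log(|A|)/β). Then ∑_{(s,a,s')∈S×A×S} d(s,a)·P(s'|s,a)·‖w(s,a,s')‖₂² ≤ 6·(log(|A|)+β)²/(β²·(1−γ)²). -/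
open Finset

lemma aux_noise_bound {S A : Type*} [Fintype S] [Fintype A] [Nonempty S] [Nonempty A]
    [DecidableEq S] [DecidableEq A]
    (d : S → A → ℝ) (hd0 : ∀ s a, 0 ≤ d s a) (hd1 : ∑ p : S × A, d p.1 p.2 = 1)
    (P : S → A → S → ℝ) (hP0 : ∀ s a s', 0 ≤ P s a s') (hP1 : ∀ s a, ∑ s', P s a s' = 1)
    (δ : S → A → S → ℝ) (E : S → A → ℝ)
    (hE : ∀ u b, E u b = ∑ s'', P u b s'' * δ u b s'')
    (M : ℝ) (hδM : ∀ s a s', |δ s a s'| ≤ M)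
    (w : S → A → S → S → A → ℝ)
    (hw : ∀ s a s' u b, w s a s' u b =
      (if (u, b) = (s, a) then (1:ℝ) else 0) * δ s a s' - d u b * E u b) :
    (∑ s, ∑ a, ∑ s', d s a * P s a s' * ∑ p : S × A, (w s a s' p.1 p.2) ^ 2) ≤ M ^ 2 := by
  have hM0 : 0 ≤ M := le_trans (abs_nonneg _)
    (hδM (Classical.arbitrary S) (Classical.arbitrary A) (Classical.arbitrary S))
  have hd1' : ∑ s, ∑ a, d s a = 1 := by
    rw [Fintype.sum_prod_type] at hd1; simpa using hd1
  have hδ2 : ∀ s a s', (δ s a s') ^ 2 ≤ M ^ 2 := by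
    intro s a s'
    have h := abs_le.mp (hδM s a s')
    nlinarith [h.1, h.2]
  have step1 : ∀ s a s', (∑ p : S × A, (w s a s' p.1 p.2) ^ 2)
      = (δ s a s') ^ 2 - 2 * δ s a s' * (d s a * E s a)
        + ∑ p : S × A, (d p.1 p.2 * E p.1 p.2) ^ 2 := by
    intro s a s'
    have hterm : ∀ p : S × A, (w s a s' p.1 p.2) ^ 2
        = (d p.1 p.2 * E p.1 p.2) ^ 2
          + (if p = (s, a) then (δ s a s') ^ 2 - 2 * δ s a s' * (d s a * E s a) else 0) := by
      intro p
      rw [hw]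
      by_cases hp : p = (s, a)
      · subst hp
        rw [if_pos (show ((((s, a) : S × A).1, ((s, a) : S × A).2) : S × A) = (s, a) from rfl),
          if_pos rfl]
        ring
      · have hne : ((p.1, p.2) : S × A) ≠ (s, a) := by rw [Prod.mk.eta]; exact hp
        rw [if_neg hne, if_neg hp]
        ring
    rw [Finset.sum_congr rfl (fun p _ => hterm p), Finset.sum_add_distrib,
      Finset.sum_ite_eq' Finset.univ ((s, a) : S × A)]
    simp only [Finset.mem_univ, if_pos]
    ring
  have step2 : ∀ s a, (∑ s', P s a s' * ∑ p : S × A, (w s a s' p.1 p.2) ^ 2)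
      = (∑ s', P s a s' * (δ s a s') ^ 2) - 2 * d s a * (E s a) ^ 2
        + ∑ p : S × A, (d p.1 p.2 * E p.1 p.2) ^ 2 := by
    intro s a
    have e : ∀ s', P s a s' * ∑ p : S × A, (w s a s' p.1 p.2) ^ 2
        = P s a s' * (δ s a s') ^ 2
          - 2 * (d s a * E s a) * (P s a s' * δ s a s')
          + P s a s' * (∑ p : S × A, (d p.1 p.2 * E p.1 p.2) ^ 2) := by
      intro s'; rw [step1]; ring
    rw [Finset.sum_congr rfl (fun s' _ => e s'), Finset.sum_add_distrib,
      Finset.sum_sub_distrib, ← Finset.mul_sum, ← Finset.sum_mul, ← hE s a, hP1, one_mul]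
    ring
  have step3 : (∑ s, ∑ a, ∑ s', d s a * P s a s' * ∑ p : S × A, (w s a s' p.1 p.2) ^ 2)
      = (∑ s, ∑ a, d s a * ∑ s', P s a s' * (δ s a s') ^ 2)
        - ∑ s, ∑ a, (d s a * E s a) ^ 2 := by
    have e1 : ∀ s a, (∑ s', d s a * P s a s' * ∑ p : S × A, (w s a s' p.1 p.2) ^ 2)
        = d s a * (∑ s', P s a s' * (δ s a s') ^ 2) - 2 * (d s a * E s a) ^ 2
          + d s a * ∑ p : S × A, (d p.1 p.2 * E p.1 p.2) ^ 2 := by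
      intro s a
      have : ∀ s', d s a * P s a s' * ∑ p : S × A, (w s a s' p.1 p.2) ^ 2
          = d s a * (P s a s' * ∑ p : S × A, (w s a s' p.1 p.2) ^ 2) := fun s' => by ring
      rw [Finset.sum_congr rfl (fun s' _ => this s'), ← Finset.mul_sum, step2]
      ring
    have e2 : (∑ p : S × A, (d p.1 p.2 * E p.1 p.2) ^ 2)
        = ∑ s, ∑ a, (d s a * E s a) ^ 2 := by
      rw [Fintype.sum_prod_type]
    calc (∑ s, ∑ a, ∑ s', d s a * P s a s' * ∑ p : S × A, (w s a s' p.1 p.2) ^ 2)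
        = ∑ s, ∑ a, (d s a * (∑ s', P s a s' * (δ s a s') ^ 2)
            - 2 * (d s a * E s a) ^ 2
            + d s a * ∑ p : S × A, (d p.1 p.2 * E p.1 p.2) ^ 2) := by
          exact Finset.sum_congr rfl fun s _ => Finset.sum_congr rfl fun a _ => e1 s a
      _ = (∑ s, ∑ a, d s a * ∑ s', P s a s' * (δ s a s') ^ 2)
            - 2 * (∑ s, ∑ a, (d s a * E s a) ^ 2)
            + (∑ s, ∑ a, d s a) * (∑ p : S × A, (d p.1 p.2 * E p.1 p.2) ^ 2) := by
          simp only [Finset.sum_add_distrib, Finset.sum_sub_distrib, ← Finset.sum_mul,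
            ← Finset.mul_sum]
      _ = (∑ s, ∑ a, d s a * ∑ s', P s a s' * (δ s a s') ^ 2)
            - ∑ s, ∑ a, (d s a * E s a) ^ 2 := by
          rw [hd1', one_mul, e2]; ring
  rw [step3]
  have h1 : (∑ s, ∑ a, d s a * ∑ s', P s a s' * (δ s a s') ^ 2) ≤ M ^ 2 := by
    calc (∑ s, ∑ a, d s a * ∑ s', P s a s' * (δ s a s') ^ 2)
        ≤ ∑ s, ∑ a, d s a * M ^ 2 := by
          apply Finset.sum_le_sum; intro s _
          apply Finset.sum_le_sum; intro a _
          apply mul_le_mul_of_nonneg_left _ (hd0 s a)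
          calc (∑ s', P s a s' * (δ s a s') ^ 2) ≤ ∑ s', P s a s' * M ^ 2 :=
                Finset.sum_le_sum fun s' _ =>
                  mul_le_mul_of_nonneg_left (hδ2 s a s') (hP0 s a s')
            _ = M ^ 2 := by rw [← Finset.sum_mul, hP1, one_mul]
      _ = M ^ 2 := by
          simp only [← Finset.sum_mul]
          rw [hd1', one_mul]
  have h2 : (0:ℝ) ≤ ∑ s, ∑ a, (d s a * E s a) ^ 2 :=
    Finset.sum_nonneg fun s _ => Finset.sum_nonneg fun a _ => sq_nonneg _
  linarith

/-- **Second-moment bound of the Boltzmann noise.** If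
`‖Q‖_∞ ≤ (1/(1−γ))·(1 + γ·log|A|/β)`, then the expected squared Euclidean norm of the
single-step Boltzmann noise is at most `6·(log|A|+β)²/(β²·(1−γ)²)`. -/
theorem boltzmann_noise_second_moment_bound {S A : Type*} [Fintype S] [Fintype A]
    [Nonempty S] [Nonempty A] [DecidableEq S] [DecidableEq A]
    (γ β : ℝ) (hγ : γ ∈ Set.Ico (0 : ℝ) 1) (hβ : 0 < β)
    (d : S → A → ℝ) (hd0 : ∀ s a, 0 ≤ d s a) (hd1 : ∑ p : S × A, d p.1 p.2 = 1)
    (P : S → A → S → ℝ) (hP0 : ∀ s a s', 0 ≤ P s a s') (hP1 : ∀ s a, ∑ s', P s a s' = 1)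
    (r : S → A → S → ℝ) (hr : ∀ s a s', |r s a s'| ≤ 1)
    (Q : S → A → ℝ)
    (hQ : ∀ s a, |Q s a| ≤ (1 / (1 - γ)) * (1 + γ * Real.log (Fintype.card A) / β))
    (w : S → A → S → S → A → ℝ)
    (hw : ∀ s a s' u b, w s a s' u b =
      (if (u, b) = (s, a) then (1 : ℝ) else 0) *
        (r s a s' + γ * ((∑ c, Q s' c * Real.exp (β * Q s' c)) /
            (∑ c, Real.exp (β * Q s' c))) - Q s a)
      - d u b * ((∑ s'', P u b s'' * r u b s'')
          + γ * ∑ s'', P u b s'' * ((∑ c, Q s'' c * Real.exp (β * Q s'' c)) /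
              (∑ c, Real.exp (β * Q s'' c)))
          - Q u b)) :
    (∑ s, ∑ a, ∑ s', d s a * P s a s' * ∑ p : S × A, (w s a s' p.1 p.2) ^ 2) ≤
      6 * (Real.log (Fintype.card A) + β) ^ 2 / (β ^ 2 * (1 - γ) ^ 2) := by
  obtain ⟨hγ0, hγ1⟩ := hγ
  have h1γ : 0 < 1 - γ := by linarith
  have hL : 0 ≤ Real.log (Fintype.card A) :=
    Real.log_nonneg (by exact_mod_cast Nat.one_le_iff_ne_zero.mpr Fintype.card_ne_zero)
  have hB0 : 0 ≤ (1 / (1 - γ)) * (1 + γ * Real.log (Fintype.card A) / β) := by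
    have h1 : 0 ≤ γ * Real.log (Fintype.card A) / β :=
      div_nonneg (mul_nonneg hγ0 hL) hβ.le
    have h2 : 0 < 1 / (1 - γ) := one_div_pos.mpr h1γ
    nlinarith
  -- bound on the Boltzmann average
  have hhb : ∀ s' : S, |(∑ c, Q s' c * Real.exp (β * Q s' c)) /
      (∑ c, Real.exp (β * Q s' c))| ≤
      (1 / (1 - γ)) * (1 + γ * Real.log (Fintype.card A) / β) := by
    intro s'
    have hden : 0 < ∑ c, Real.exp (β * Q s' c) :=
      Finset.sum_pos (fun c _ => Real.exp_pos _) Finset.univ_nonempty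
    rw [abs_div, abs_of_pos hden, div_le_iff₀ hden]
    calc |∑ c, Q s' c * Real.exp (β * Q s' c)|
        ≤ ∑ c, |Q s' c * Real.exp (β * Q s' c)| := Finset.abs_sum_le_sum_abs _ _
      _ ≤ ∑ c, (1 / (1 - γ)) * (1 + γ * Real.log (Fintype.card A) / β) *
            Real.exp (β * Q s' c) := by
          apply Finset.sum_le_sum
          intro c _
          rw [abs_mul, abs_of_pos (Real.exp_pos _)]
          exact mul_le_mul_of_nonneg_right (hQ s' c) (Real.exp_pos _).le
      _ = (1 / (1 - γ)) * (1 + γ * Real.log (Fintype.card A) / β) *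
            ∑ c, Real.exp (β * Q s' c) := by rw [Finset.mul_sum]
  -- bound on δ
  have hδM : ∀ s a s', |r s a s' + γ * ((∑ c, Q s' c * Real.exp (β * Q s' c)) /
        (∑ c, Real.exp (β * Q s' c))) - Q s a| ≤
      1 + (1 + γ) * ((1 / (1 - γ)) * (1 + γ * Real.log (Fintype.card A) / β)) := by
    intro s a s'
    have h1 := abs_le.mp (hr s a s')
    have h2 := abs_le.mp (hhb s')
    have h3 := abs_le.mp (hQ s a)
    rw [abs_le]
    constructor
    · nlinarith [mul_le_mul_of_nonneg_left h2.1 hγ0, mul_le_mul_of_nonneg_left h2.2 hγ0]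
    · nlinarith [mul_le_mul_of_nonneg_left h2.1 hγ0, mul_le_mul_of_nonneg_left h2.2 hγ0]
  -- E is the P-average of δ
  have hE : ∀ (u : S) (b : A), ((∑ s'', P u b s'' * r u b s'')
      + γ * ∑ s'', P u b s'' * ((∑ c, Q s'' c * Real.exp (β * Q s'' c)) /
          (∑ c, Real.exp (β * Q s'' c)))
      - Q u b)
      = ∑ s'', P u b s'' * (r u b s'' + γ * ((∑ c, Q s'' c * Real.exp (β * Q s'' c)) /
          (∑ c, Real.exp (β * Q s'' c))) - Q u b) := by
    intro u b
    have h1 : ∑ s'', P u b s'' * (r u b s'' + γ * ((∑ c, Q s'' c * Real.exp (β * Q s'' c)) /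
          (∑ c, Real.exp (β * Q s'' c))) - Q u b)
        = (∑ s'', P u b s'' * r u b s'')
          + γ * (∑ s'', P u b s'' * ((∑ c, Q s'' c * Real.exp (β * Q s'' c)) /
              (∑ c, Real.exp (β * Q s'' c))))
          - (∑ s'', P u b s'') * Q u b := by
      rw [Finset.mul_sum, Finset.sum_mul, ← Finset.sum_add_distrib, ← Finset.sum_sub_distrib]
      exact Finset.sum_congr rfl fun x _ => by ring
    rw [h1, hP1, one_mul]
  have main := aux_noise_bound d hd0 hd1 P hP0 hP1
    (fun s a s' => r s a s' + γ * ((∑ c, Q s' c * Real.exp (β * Q s' c)) /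
        (∑ c, Real.exp (β * Q s' c))) - Q s a)
    (fun u b => (∑ s'', P u b s'' * r u b s'')
        + γ * ∑ s'', P u b s'' * ((∑ c, Q s'' c * Real.exp (β * Q s'' c)) /
            (∑ c, Real.exp (β * Q s'' c)))
        - Q u b)
    hE
    (1 + (1 + γ) * ((1 / (1 - γ)) * (1 + γ * Real.log (Fintype.card A) / β)))
    hδM w hw
  refine le_trans main ?_
  -- final numeric bound
  rw [le_div_iff₀ (mul_pos (pow_pos hβ 2) (pow_pos h1γ 2))]
  have key : (1 + (1 + γ) * ((1 / (1 - γ)) * (1 + γ * Real.log (Fintype.card A) / β)))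
      * (β * (1 - γ)) = 2 * β + γ * (1 + γ) * Real.log (Fintype.card A) := by
    field_simp
    ring
  have e : (1 + (1 + γ) * ((1 / (1 - γ)) * (1 + γ * Real.log (Fintype.card A) / β))) ^ 2
      * (β ^ 2 * (1 - γ) ^ 2)
      = (2 * β + γ * (1 + γ) * Real.log (Fintype.card A)) ^ 2 := by
    rw [← key]; ring
  rw [e]
  have hc0 : 0 ≤ γ * (1 + γ) * Real.log (Fintype.card A) :=
    mul_nonneg (mul_nonneg hγ0 (by linarith)) hL
  have hc1 : γ * (1 + γ) * Real.log (Fintype.card A) ≤ 2 * Real.log (Fintype.card A) := by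
    nlinarith [mul_nonneg hL (show (0:ℝ) ≤ 2 - γ * (1 + γ) by nlinarith)]
  nlinarith [sq_nonneg (Real.log (Fintype.card A) + β),
    mul_nonneg (sub_nonneg.mpr hc1)
      (show (0:ℝ) ≤ 4 * β + 2 * Real.log (Fintype.card A)
          + γ * (1 + γ) * Real.log (Fintype.card A) by linarith),
    hL, hβ.le]
end

section
/- Let n ≥ 1 be an integer, ρ ∈ (0,1), c ≥ 0, M ≥ 0, and m₀ ≥ 0. Let A be an n×n real matrix whose ℓ∞ operator norm (maximum absolute row sum) is at most ρ. Let X_0 and W_0, W_1, W_2, … be symmetric positive semidefinite n×n real matrices such that xᵀ·W_k·x ≤ M·‖x‖₂² and xᵀ·X_0·x ≤ m₀·‖x‖₂² for all x ∈ ℝⁿ and all k ≥ 0. Define X_{k+1} := A·X_k·Aᵀ + c·W_k. Then for all k ≥ 0, the trace satisfies tr(X_k) ≤ n²·c·M/(1−ρ) + n²·m₀·ρ^{2k}. -/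
open Matrix

/-- **Trace bound for the autocorrelation recursion.** If `‖A‖_∞ ≤ ρ < 1`, the symmetric
PSD matrices `W_k` and `X_0` have quadratic forms bounded by `M·‖x‖₂²` and `m₀·‖x‖₂²`,
and `X_{k+1} = A·X_k·Aᵀ + c·W_k`, then `tr(X_k) ≤ n²·c·M/(1−ρ) + n²·m₀·ρ^{2k}`. -/
theorem trace_autocorrelation_recursion_bound (n : ℕ) (hn : 1 ≤ n)
    (ρ c M m₀ : ℝ) (hρ : ρ ∈ Set.Ioo (0 : ℝ) 1) (hc : 0 ≤ c) (hM : 0 ≤ M) (hm₀ : 0 ≤ m₀)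
    (A : Matrix (Fin n) (Fin n) ℝ) (hA : ∀ i, ∑ j, |A i j| ≤ ρ)
    (X W : ℕ → Matrix (Fin n) (Fin n) ℝ)
    (hWsym : ∀ k, (W k)ᵀ = W k) (hX0sym : (X 0)ᵀ = X 0)
    (hWpsd : ∀ k (x : Fin n → ℝ), 0 ≤ x ⬝ᵥ (W k *ᵥ x))
    (hX0psd : ∀ x : Fin n → ℝ, 0 ≤ x ⬝ᵥ (X 0 *ᵥ x))
    (hWbound : ∀ k (x : Fin n → ℝ), x ⬝ᵥ (W k *ᵥ x) ≤ M * ∑ i, (x i) ^ 2)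
    (hX0bound : ∀ x : Fin n → ℝ, x ⬝ᵥ (X 0 *ᵥ x) ≤ m₀ * ∑ i, (x i) ^ 2)
    (hrec : ∀ k, X (k + 1) = A * X k * Aᵀ + c • W k) :
    ∀ k, (X k).trace ≤ (n : ℝ) ^ 2 * c * M / (1 - ρ) + (n : ℝ) ^ 2 * m₀ * ρ ^ (2 * k) := by
  obtain ⟨hρ0, hρ1⟩ := hρ
  have h1ρ : (0:ℝ) < 1 - ρ := by linarith
  have hcM : 0 ≤ c * M / (1 - ρ) := div_nonneg (mul_nonneg hc hM) h1ρ.le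
  have hβnn : ∀ k, (0:ℝ) ≤ c * M / (1 - ρ) + m₀ * ρ ^ (2 * k) := by
    intro k
    have : 0 ≤ m₀ * ρ ^ (2*k) := mul_nonneg hm₀ (pow_nonneg hρ0.le _)
    linarith
  have l2le : ∀ x : Fin n → ℝ, ∑ i, (x i)^2 ≤ (∑ i, |x i|)^2 := by
    intro x
    calc ∑ i, (x i)^2 = ∑ i, |x i|^2 := by simp [sq_abs]
      _ ≤ (∑ i, |x i|)^2 := Finset.sum_sq_le_sq_sum_of_nonneg (fun i _ => abs_nonneg _)
  -- main invariant
  have key : ∀ k (x : Fin n → ℝ),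
      x ⬝ᵥ (X k *ᵥ x) ≤ (c * M / (1 - ρ) + m₀ * ρ ^ (2 * k)) * (∑ i, |x i|)^2 := by
    intro k
    induction k with
    | zero =>
      intro x
      calc x ⬝ᵥ (X 0 *ᵥ x) ≤ m₀ * ∑ i, (x i)^2 := hX0bound x
        _ ≤ m₀ * (∑ i, |x i|)^2 := mul_le_mul_of_nonneg_left (l2le x) hm₀
        _ ≤ (c * M / (1 - ρ) + m₀ * ρ ^ (2 * 0)) * (∑ i, |x i|)^2 := by
            have h0 : (0:ℝ) ≤ (∑ i, |x i|)^2 := sq_nonneg _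
            nlinarith
    | succ k ih =>
      intro x
      set y : Fin n → ℝ := Aᵀ *ᵥ x with hy
      have hsplit : x ⬝ᵥ (X (k+1) *ᵥ x) = y ⬝ᵥ (X k *ᵥ y) + c * (x ⬝ᵥ (W k *ᵥ x)) := by
        rw [hrec k, add_mulVec, dotProduct_add, smul_mulVec, dotProduct_smul,
          smul_eq_mul]
        congr 1
        rw [show (A * X k * Aᵀ) *ᵥ x = A *ᵥ (X k *ᵥ (Aᵀ *ᵥ x)) by
          simp [Matrix.mulVec_mulVec, Matrix.mul_assoc]]
        rw [Matrix.dotProduct_mulVec x A, ← Matrix.mulVec_transpose]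
      -- ℓ1 contraction
      have hy1 : ∑ j, |y j| ≤ ρ * ∑ i, |x i| := by
        have : ∀ j, |y j| ≤ ∑ i, |A i j| * |x i| := by
          intro j
          calc |y j| = |∑ i, A i j * x i| := by
                simp [hy, Matrix.mulVec, dotProduct, Matrix.transpose_apply]
            _ ≤ ∑ i, |A i j * x i| := Finset.abs_sum_le_sum_abs _ _
            _ = ∑ i, |A i j| * |x i| := by simp [abs_mul]
        calc ∑ j, |y j| ≤ ∑ j, ∑ i, |A i j| * |x i| := Finset.sum_le_sum fun j _ => this j
          _ = ∑ i, (∑ j, |A i j|) * |x i| := by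
              rw [Finset.sum_comm]
              simp [Finset.sum_mul]
          _ ≤ ∑ i, ρ * |x i| := Finset.sum_le_sum fun i _ =>
              mul_le_mul_of_nonneg_right (hA i) (abs_nonneg _)
          _ = ρ * ∑ i, |x i| := by rw [Finset.mul_sum]
      have hx1 : (0:ℝ) ≤ ∑ i, |x i| := Finset.sum_nonneg fun i _ => abs_nonneg _
      have hy1nn : (0:ℝ) ≤ ∑ j, |y j| := Finset.sum_nonneg fun j _ => abs_nonneg _
      have hy2 : (∑ j, |y j|)^2 ≤ ρ^2 * (∑ i, |x i|)^2 := by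
        have := mul_self_le_mul_self hy1nn hy1
        nlinarith
      have hXk : y ⬝ᵥ (X k *ᵥ y) ≤ (c * M / (1 - ρ) + m₀ * ρ ^ (2 * k)) * (ρ^2 * (∑ i, |x i|)^2) :=
        (ih y).trans (mul_le_mul_of_nonneg_left hy2 (hβnn k))
      have hWk : c * (x ⬝ᵥ (W k *ᵥ x)) ≤ c * M * (∑ i, |x i|)^2 := by
        have h1 : x ⬝ᵥ (W k *ᵥ x) ≤ M * (∑ i, |x i|)^2 :=
          (hWbound k x).trans (mul_le_mul_of_nonneg_left (l2le x) hM)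
        calc c * (x ⬝ᵥ (W k *ᵥ x)) ≤ c * (M * (∑ i, |x i|)^2) :=
              mul_le_mul_of_nonneg_left h1 hc
          _ = c * M * (∑ i, |x i|)^2 := by ring
      rw [hsplit]
      have hS : (0:ℝ) ≤ (∑ i, |x i|)^2 := sq_nonneg _
      have hP : (0:ℝ) ≤ ρ ^ (2*k) := pow_nonneg hρ0.le _
      have hpow : ρ ^ (2 * (k+1)) = ρ ^ (2*k) * ρ^2 := by ring
      have hcMS : 0 ≤ c * M * (∑ i, |x i|)^2 := by positivity
      -- combine
      have hfinal : (c * M / (1 - ρ) + m₀ * ρ ^ (2 * k)) * (ρ^2 * (∑ i, |x i|)^2)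
          + c * M * (∑ i, |x i|)^2
          ≤ (c * M / (1 - ρ) + m₀ * ρ ^ (2 * (k+1))) * (∑ i, |x i|)^2 := by
        rw [hpow]
        have hD : c * M / (1 - ρ) * (1 - ρ^2) = c * M * (1 + ρ) := by
          field_simp
          ring
        have hDS : c * M / (1 - ρ) * (1 - ρ^2) * (∑ i, |x i|)^2
            = c * M * (1 + ρ) * (∑ i, |x i|)^2 := by rw [hD]
        have hpos : 0 ≤ c * M * ρ * (∑ i, |x i|)^2 := by positivity
        nlinarith [hDS, hpos]
      linarith [hXk, hWk]
  -- conclude trace bound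
  intro k
  have hdiag : ∀ i, X k i i ≤ c * M / (1 - ρ) + m₀ * ρ ^ (2 * k) := by
    intro i
    have h := key k (Pi.single i 1)
    have h1 : (Pi.single i 1 : Fin n → ℝ) ⬝ᵥ (X k *ᵥ Pi.single i 1) = X k i i := by
      simp [Matrix.mulVec_single, single_dotProduct, dotProduct_single]
    have h2 : (∑ j, |(Pi.single i 1 : Fin n → ℝ) j|) = 1 := by
      have : ∀ j, |(Pi.single i 1 : Fin n → ℝ) j| = if j = i then 1 else 0 := by
        intro j
        by_cases hj : j = i <;> simp [Pi.single_apply, hj]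
      simp [this]
    rw [h1, h2] at h
    simpa using h
  have htr : (X k).trace ≤ n * (c * M / (1 - ρ) + m₀ * ρ ^ (2 * k)) := by
    calc (X k).trace = ∑ i, X k i i := by simp [Matrix.trace, Matrix.diag]
      _ ≤ ∑ _i : Fin n, (c * M / (1 - ρ) + m₀ * ρ ^ (2 * k)) :=
          Finset.sum_le_sum fun i _ => hdiag i
      _ = n * (c * M / (1 - ρ) + m₀ * ρ ^ (2 * k)) := by
          simp [Finset.sum_const, nsmul_eq_mul]
          ring
  have hn1 : (1:ℝ) ≤ n := by exact_mod_cast hn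
  have hnn : (n:ℝ) ≤ (n:ℝ)^2 := by nlinarith
  have hP : (0:ℝ) ≤ m₀ * ρ ^ (2*k) := mul_nonneg hm₀ (pow_nonneg hρ0.le _)
  calc (X k).trace ≤ n * (c * M / (1 - ρ) + m₀ * ρ ^ (2 * k)) := htr
    _ ≤ (n:ℝ)^2 * (c * M / (1 - ρ) + m₀ * ρ ^ (2 * k)) :=
        mul_le_mul_of_nonneg_right hnn (hβnn k)
    _ = (n:ℝ)^2 * c * M / (1 - ρ) + (n:ℝ)^2 * m₀ * ρ ^ (2*k) := by ring
end

section
/- In the stochastic LSE soft Q-learning setting below, for every k ≥ 0, E[‖Q_k^{LSE} − Q*‖_∞] ≤ 3√6·α^{1/2}·d_max·(log(|A|)+β)·n/(β·d_min^{3/2}·(1−γ)^{5/2}) + 4·α·γ·d_max·n^{3/2}·k·ρ^{k−1}/(1−γ) + log(|A|)/(β·d_min·(1−γ)) + 2·n^{3/2}·ρ^k/(1−γ). -/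
/-!
The iterates are a deterministic function of the sample history and the samples are i.i.d., so
every expectation is a finite sum over histories weighted by products of the sampling
probabilities `d(s,a) P(s'|s,a)`.

Split the error as `Q_k - Q* = x_k + Δ_k`, where `x_k` is the linear system
`x_{k+1} = (1 - α d) x_k + α w_k` driven by the centred sampled TD residual `w_k`. The iterates
stay in the sup-norm ball of radius `M = (1 + log|A|/β)/(1 - γ)`, so the residual is at most
`2M`; as the noise is centred, `E‖x_k‖₂²` contracts by `ρ²` up to an additive `α²(2M)²`. The
remainder `Δ_k` carries no noise: log-sum-exp is 1-Lipschitz for the sup norm and within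
`log|A|/β` of the max, whence `‖Δ_{k+1}‖ ≤ ρ‖Δ_k‖ + αγ d_max (‖x_k‖ + log|A|/β)`. Solving the
two scalar recursions and comparing constants gives the bound.
-/

open MeasureTheory ProbabilityTheory Finset

namespace SoftQLearning

section SupNorm

variable {ι : Type*} [Fintype ι]

lemma norm_le_sqrt_sum_sq (f : ι → ℝ) : ‖f‖ ≤ √(∑ i, f i ^ 2) :=
  (pi_norm_le_iff_of_nonneg (Real.sqrt_nonneg _)).mpr fun i => Real.abs_le_sqrt <|
    single_le_sum (f := fun i => f i ^ 2) (fun _ _ => sq_nonneg _) (mem_univ i)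

lemma sqrt_sum_sq_le_sqrt_card_mul_norm (f : ι → ℝ) :
    √(∑ i, f i ^ 2) ≤ √(Fintype.card ι) * ‖f‖ := by
  rw [← Real.sqrt_sq (norm_nonneg f), ← Real.sqrt_mul (Nat.cast_nonneg _)]
  refine Real.sqrt_le_sqrt ?_
  calc ∑ i, f i ^ 2 ≤ ∑ _i : ι, ‖f‖ ^ 2 := sum_le_sum fun i _ => by
        rw [← sq_abs]; gcongr; exact norm_le_pi_norm f i
    _ = _ := by rw [sum_const, card_univ, nsmul_eq_mul]

variable [Nonempty ι]

lemma abs_sup'_le_norm (f : ι → ℝ) : |univ.sup' univ_nonempty f| ≤ ‖f‖ := by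
  obtain ⟨i, -, hi⟩ := exists_mem_eq_sup' univ_nonempty f
  rw [hi]
  exact norm_le_pi_norm f i

lemma sup'_abs_eq_norm (f : ι → ℝ) : univ.sup' univ_nonempty (fun i => |f i|) = ‖f‖ :=
  le_antisymm (sup'_le _ _ fun i _ => norm_le_pi_norm f i)
    ((pi_norm_le_iff_of_nonneg ((abs_nonneg _).trans
      (le_sup' (fun i => |f i|) (mem_univ (Classical.arbitrary ι))))).mpr
      fun i => le_sup' (fun i => |f i|) (mem_univ i))

end SupNorm

section LogSumExp

variable {ι : Type*} [Fintype ι]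

noncomputable def logSumExp (β : ℝ) (f : ι → ℝ) : ℝ :=
  1 / β * Real.log (∑ i, Real.exp (β * f i))

variable [Nonempty ι] {β : ℝ}

lemma logSumExp_add_const (hβ : β ≠ 0) (f : ι → ℝ) (c : ℝ) :
    logSumExp β (fun i => f i + c) = logSumExp β f + c := by
  have hpos : 0 < ∑ i, Real.exp (β * f i) := sum_pos (fun i _ => Real.exp_pos _) univ_nonempty
  simp_rw [logSumExp, mul_add, Real.exp_add, ← sum_mul,
    Real.log_mul hpos.ne' (Real.exp_pos _).ne', Real.log_exp]
  field_simp

lemma logSumExp_mono (hβ : 0 < β) {f g : ι → ℝ} (h : f ≤ g) :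
    logSumExp β f ≤ logSumExp β g := by
  unfold logSumExp
  gcongr
  exact h _

lemma logSumExp_const (hβ : β ≠ 0) (c : ℝ) :
    logSumExp β (fun _ : ι => c) = c + Real.log (Fintype.card ι) / β := by
  have hcard : (Fintype.card ι : ℝ) ≠ 0 := Nat.cast_ne_zero.mpr Fintype.card_ne_zero
  rw [logSumExp, sum_const, card_univ, nsmul_eq_mul,
    Real.log_mul hcard (Real.exp_pos _).ne', Real.log_exp]
  field_simp
  ring

lemma sup'_le_logSumExp (hβ : 0 < β) (f : ι → ℝ) :
    univ.sup' univ_nonempty f ≤ logSumExp β f := by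
  obtain ⟨i, -, hi⟩ := exists_mem_eq_sup' univ_nonempty f
  calc univ.sup' univ_nonempty f = 1 / β * Real.log (Real.exp (β * f i)) := by
        rw [hi, Real.log_exp]; field_simp
    _ ≤ logSumExp β f := by
        unfold logSumExp
        gcongr
        exact single_le_sum (f := fun j => Real.exp (β * f j))
          (fun j _ => (Real.exp_pos _).le) (mem_univ i)

lemma logSumExp_le_sup'_add (hβ : 0 < β) (f : ι → ℝ) :
    logSumExp β f ≤ univ.sup' univ_nonempty f + Real.log (Fintype.card ι) / β := by
  rw [← logSumExp_const hβ.ne']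
  exact logSumExp_mono hβ fun i => le_sup' f (mem_univ i)

lemma lipschitzWith_logSumExp (hβ : 0 < β) : LipschitzWith 1 (logSumExp (ι := ι) β) := by
  refine LipschitzWith.of_le_add fun f g => ?_
  rw [← logSumExp_add_const hβ.ne']
  refine logSumExp_mono hβ fun i => ?_
  have := (le_abs_self _).trans ((norm_le_pi_norm (f - g) i).trans_eq (dist_eq_norm f g).symm)
  simp only [Pi.sub_apply] at this
  linarith

lemma abs_logSumExp_sub_le (hβ : 0 < β) (f g : ι → ℝ) :
    |logSumExp β f - logSumExp β g| ≤ ‖f - g‖ := by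
  simpa [Real.dist_eq, dist_eq_norm] using (lipschitzWith_logSumExp (ι := ι) hβ).dist_le_mul f g

lemma abs_logSumExp_le (hβ : 0 < β) (f : ι → ℝ) :
    |logSumExp β f| ≤ ‖f‖ + Real.log (Fintype.card ι) / β := by
  have hlip := abs_logSumExp_sub_le hβ f 0
  have hL : 0 ≤ Real.log (Fintype.card ι) / β :=
    div_nonneg (Real.log_natCast_nonneg _) hβ.le
  rw [sub_zero, Pi.zero_def, logSumExp_const hβ.ne', zero_add, abs_le] at hlip
  rw [abs_le]
  constructor <;> linarith

end LogSumExp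

section WeightedSums

variable {V I : Type*} [Fintype V] [Fintype I] {q : V → ℝ}

lemma abs_sum_mul_le_of_abs_le (hq0 : ∀ v, 0 ≤ q v) (hq : ∑ v, q v = 1) {f : V → ℝ} {c : ℝ}
    (hf : ∀ v, |f v| ≤ c) : |∑ v, q v * f v| ≤ c := by
  calc |∑ v, q v * f v| ≤ ∑ v, q v * c := (abs_sum_le_sum_abs _ _).trans <|
        sum_le_sum fun v _ => by rw [abs_mul, abs_of_nonneg (hq0 v)]; gcongr; exacts [hq0 v, hf v]
    _ = c := by rw [← sum_mul, hq, one_mul]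

lemma sum_mul_sub_sum_mul_eq_zero (hq : ∑ v, q v = 1) (f : V → ℝ) :
    ∑ v, q v * (f v - ∑ u, q u * f u) = 0 := by
  simp only [mul_sub, sum_sub_distrib, ← sum_mul, hq, one_mul, sub_self]

lemma sum_mul_sum_sq_add_of_mean_eq_zero (hq : ∑ v, q v = 1) (y : I → ℝ) {Z : V → I → ℝ}
    (hZ : ∀ i, ∑ v, q v * Z v i = 0) :
    ∑ v, q v * ∑ i, (y i + Z v i) ^ 2 = ∑ i, y i ^ 2 + ∑ v, q v * ∑ i, Z v i ^ 2 := by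
  have expand : ∀ v, q v * ∑ i, (y i + Z v i) ^ 2 =
      ∑ i, (q v * y i ^ 2 + 2 * y i * (q v * Z v i)) + q v * ∑ i, Z v i ^ 2 := by
    intro v
    simp only [mul_sum, ← sum_add_distrib]
    exact sum_congr rfl fun i _ => by ring
  rw [sum_congr rfl fun v _ => expand v, sum_add_distrib, sum_comm]
  simp only [sum_add_distrib, ← sum_mul, hq, one_mul, ← mul_sum, hZ, mul_zero, add_zero]

lemma sum_mul_sum_sq_sub_mean_le (hq : ∑ v, q v = 1) (Y : V → I → ℝ) :
    ∑ v, q v * ∑ i, (Y v i - ∑ u, q u * Y u i) ^ 2 ≤ ∑ v, q v * ∑ i, Y v i ^ 2 := by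
  have h := sum_mul_sum_sq_add_of_mean_eq_zero hq (fun i => ∑ u, q u * Y u i)
    (Z := fun v i => Y v i - ∑ u, q u * Y u i)
    (fun i => sum_mul_sub_sum_mul_eq_zero hq (Y · i))
  simp only [add_sub_cancel] at h
  rw [h]
  exact le_add_of_nonneg_left (sum_nonneg fun i _ => sq_nonneg _)

lemma sum_mul_le_sqrt_sum_mul_sq (hq0 : ∀ v, 0 ≤ q v) (hq : ∑ v, q v = 1) (f : V → ℝ) :
    ∑ v, q v * f v ≤ √(∑ v, q v * f v ^ 2) := by
  refine (le_abs_self _).trans (Real.abs_le_sqrt ?_)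
  have := sum_sq_le_sum_mul_sum_of_sq_le_mul univ (r := fun v => q v * f v)
    (fun v _ => hq0 v) (fun v _ => mul_nonneg (hq0 v) (sq_nonneg (f v)))
    (fun v _ => le_of_eq (by ring))
  rwa [hq, one_mul] at this

end WeightedSums

section Histories

variable {V : Type*} {q : V → ℝ} {k : ℕ}

noncomputable def histWeight (q : V → ℝ) {k : ℕ} (t : Fin k → V) : ℝ := ∏ j, q (t j)

lemma histWeight_nonneg (hq0 : ∀ v, 0 ≤ q v) (t : Fin k → V) : 0 ≤ histWeight q t :=
  prod_nonneg fun j _ => hq0 (t j)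

lemma histWeight_snoc (t : Fin k → V) (v : V) :
    histWeight q (Fin.snoc t v : Fin (k + 1) → V) = histWeight q t * q v := by
  simp [histWeight, Fin.prod_univ_castSucc]

variable [Fintype V]

noncomputable def histExp (q : V → ℝ) (k : ℕ) (F : (Fin k → V) → ℝ) : ℝ :=
  ∑ t, histWeight q t * F t

lemma sum_histWeight (hq : ∑ v, q v = 1) (k : ℕ) : ∑ t : Fin k → V, histWeight q t = 1 := by
  simp only [histWeight, ← Fintype.prod_sum, hq, prod_const_one]

lemma histExp_succ (F : (Fin (k + 1) → V) → ℝ) :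
    histExp q (k + 1) F = histExp q k fun t => ∑ v, q v * F (Fin.snoc t v) := by
  rw [histExp, ← (Fin.snocEquiv fun _ => V).sum_comp, Fintype.sum_prod_type, sum_comm]
  simp only [histExp, mul_sum, Fin.snocEquiv, Equiv.coe_fn_mk, histWeight_snoc, mul_assoc]

lemma histExp_mono (hq0 : ∀ v, 0 ≤ q v) {F G : (Fin k → V) → ℝ} (h : ∀ t, F t ≤ G t) :
    histExp q k F ≤ histExp q k G :=
  sum_le_sum fun t _ => mul_le_mul_of_nonneg_left (h t) (histWeight_nonneg hq0 t)

lemma histExp_add (F G : (Fin k → V) → ℝ) :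
    histExp q k (fun t => F t + G t) = histExp q k F + histExp q k G := by
  simp only [histExp, mul_add, sum_add_distrib]

lemma histExp_const_mul (c : ℝ) (F : (Fin k → V) → ℝ) :
    histExp q k (fun t => c * F t) = c * histExp q k F := by
  simp only [histExp, mul_sum, mul_left_comm]

lemma histExp_const (hq : ∑ v, q v = 1) (c : ℝ) : histExp q k (fun _ => c) = c := by
  rw [histExp, ← sum_mul, sum_histWeight hq, one_mul]

lemma histExp_le_sqrt (hq0 : ∀ v, 0 ≤ q v) (hq : ∑ v, q v = 1) (F : (Fin k → V) → ℝ) :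
    histExp q k F ≤ √(histExp q k fun t => F t ^ 2) :=
  sum_mul_le_sqrt_sum_mul_sq (histWeight_nonneg hq0) (sum_histWeight hq k) F

end Histories

lemma le_pow_mul_add_div_of_le_mul_add {u : ℕ → ℝ} {a b : ℝ} (ha0 : 0 ≤ a) (ha1 : a < 1)
    (hb : 0 ≤ b) (h : ∀ k, u (k + 1) ≤ a * u k + b) (k : ℕ) :
    u k ≤ a ^ k * u 0 + b / (1 - a) := by
  have h1a : 0 < 1 - a := sub_pos.mpr ha1
  induction k with
  | zero => simpa using div_nonneg hb h1a.le
  | succ k ih =>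
    calc u (k + 1) ≤ a * (a ^ k * u 0 + b / (1 - a)) + b :=
          (h k).trans (by gcongr)
      _ = a ^ (k + 1) * u 0 + b / (1 - a) := by field_simp; ring

lemma le_of_le_mul_add_pow_add {δ : ℕ → ℝ} {ρ m c : ℝ} (hρ0 : 0 ≤ ρ) (hρ1 : ρ < 1)
    (hc : 0 ≤ c) (h0 : δ 0 ≤ 0) (h : ∀ k, δ (k + 1) ≤ ρ * δ k + (m * ρ ^ k + c)) (k : ℕ) :
    δ k ≤ m * k * ρ ^ (k - 1) + c / (1 - ρ) := by
  have h1ρ : 0 < 1 - ρ := sub_pos.mpr hρ1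
  induction k with
  | zero => simpa using h0.trans (div_nonneg hc h1ρ.le)
  | succ k ih =>
    have hk : (k : ℝ) * ρ ^ (k - 1) * ρ = k * ρ ^ k := by
      rcases k with _ | k
      · simp
      · rw [Nat.add_sub_cancel, pow_succ]; ring
    calc δ (k + 1) ≤ ρ * (m * k * ρ ^ (k - 1) + c / (1 - ρ)) + (m * ρ ^ k + c) :=
          (h k).trans (by gcongr)
      _ = m * ↑(k + 1) * ρ ^ (k + 1 - 1) + c / (1 - ρ) := by
          rw [Nat.add_sub_cancel]; push_cast; field_simp; linear_combination m * (1 - ρ) * hk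

section LinearIteration

variable {V I : Type*}

def linearIter (c x₀ : I → ℝ) (W : (k : ℕ) → (Fin k → V) → V → I → ℝ) :
    (k : ℕ) → (Fin k → V) → I → ℝ
  | 0, _ => x₀
  | k + 1, t => fun i =>
      c i * linearIter c x₀ W k (Fin.init t) i + W k (Fin.init t) (t (Fin.last k)) i

variable {c x₀ : I → ℝ} {W : (k : ℕ) → (Fin k → V) → V → I → ℝ}

lemma linearIter_snoc {k : ℕ} (t : Fin k → V) (v : V) :
    linearIter c x₀ W (k + 1) (Fin.snoc t v) =
      fun i => c i * linearIter c x₀ W k t i + W k t v i := by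
  simp [linearIter]

variable [Fintype V] [Fintype I] {q : V → ℝ} {a σ : ℝ}

lemma histExp_sum_sq_linearIter_le (hq0 : ∀ v, 0 ≤ q v) (hq : ∑ v, q v = 1) (ha0 : 0 ≤ a)
    (ha1 : a < 1) (hc : ∀ i, |c i| ≤ a) (hW0 : ∀ k t i, ∑ v, q v * W k t v i = 0)
    (hW : ∀ k t, ∑ v, q v * ∑ i, W k t v i ^ 2 ≤ σ ^ 2) (k : ℕ) :
    histExp q k (fun t => ∑ i, linearIter c x₀ W k t i ^ 2) ≤
      a ^ (2 * k) * ∑ i, x₀ i ^ 2 + σ ^ 2 / (1 - a ^ 2) := by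
  have hstep : ∀ k, histExp q (k + 1) (fun t => ∑ i, linearIter c x₀ W (k + 1) t i ^ 2) ≤
      a ^ 2 * histExp q k (fun t => ∑ i, linearIter c x₀ W k t i ^ 2) + σ ^ 2 := by
    intro k
    rw [histExp_succ, ← histExp_const_mul, ← histExp_const (k := k) hq (σ ^ 2), ← histExp_add]
    refine histExp_mono hq0 fun t => ?_
    simp only [linearIter_snoc]
    rw [sum_mul_sum_sq_add_of_mean_eq_zero hq _ (hW0 k t), mul_sum]
    gcongr with i
    · rw [mul_pow, ← sq_abs (c i)]
      gcongr
      exact hc i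
    · exact hW k t
  have := le_pow_mul_add_div_of_le_mul_add
    (u := fun k => histExp q k (fun t => ∑ i, linearIter c x₀ W k t i ^ 2))
    (sq_nonneg a) (by nlinarith) (sq_nonneg σ) hstep k
  have h0 : histExp q 0 (fun t => ∑ i, linearIter c x₀ W 0 t i ^ 2) = ∑ i, x₀ i ^ 2 := by
    simp only [linearIter]
    exact histExp_const hq _
  rwa [← pow_mul, h0] at this

lemma histExp_norm_linearIter_le (hq0 : ∀ v, 0 ≤ q v) (hq : ∑ v, q v = 1) (ha0 : 0 ≤ a)
    (ha1 : a < 1) (hc : ∀ i, |c i| ≤ a) (hW0 : ∀ k t i, ∑ v, q v * W k t v i = 0)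
    (hW : ∀ k t, ∑ v, q v * ∑ i, W k t v i ^ 2 ≤ σ ^ 2) (hσ : 0 ≤ σ) (k : ℕ) :
    histExp q k (fun t => ‖linearIter c x₀ W k t‖) ≤
      a ^ k * √(∑ i, x₀ i ^ 2) + σ / √(1 - a ^ 2) := by
  have h1a : 0 < 1 - a ^ 2 := by nlinarith
  set B := σ / √(1 - a ^ 2)
  calc histExp q k (fun t => ‖linearIter c x₀ W k t‖)
      ≤ histExp q k (fun t => √(∑ i, linearIter c x₀ W k t i ^ 2)) :=
        histExp_mono hq0 fun t => norm_le_sqrt_sum_sq _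
    _ ≤ √(histExp q k fun t => ∑ i, linearIter c x₀ W k t i ^ 2) := by
        refine (histExp_le_sqrt hq0 hq _).trans_eq ?_
        simp only [Real.sq_sqrt (sum_nonneg fun _ _ => sq_nonneg _)]
    _ ≤ √((a ^ k * √(∑ i, x₀ i ^ 2)) ^ 2 + B ^ 2) := by
        gcongr
        rw [mul_pow, div_pow, Real.sq_sqrt (sum_nonneg fun _ _ => sq_nonneg _),
          Real.sq_sqrt h1a.le, ← pow_mul, mul_comm k 2]
        exact histExp_sum_sq_linearIter_le hq0 hq ha0 ha1 hc hW0 hW k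
    _ ≤ √((a ^ k * √(∑ i, x₀ i ^ 2) + B) ^ 2) := by
        gcongr
        nlinarith [mul_nonneg (mul_nonneg (pow_nonneg ha0 k) (Real.sqrt_nonneg (∑ i, x₀ i ^ 2)))
          (div_nonneg hσ (Real.sqrt_nonneg (1 - a ^ 2)))]
    _ = a ^ k * √(∑ i, x₀ i ^ 2) + B := Real.sqrt_sq (by positivity)

end LinearIteration

section Sampling

variable {Ω : Type*} [MeasurableSpace Ω] {μ : Measure Ω}

lemma nullMeasurableSet_of_measure_add_measure_compl_le [IsFiniteMeasure μ] {s : Set Ω}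
    (h : μ s + μ sᶜ ≤ μ Set.univ) : NullMeasurableSet s μ := by
  set T := toMeasurable μ sᶜ
  have hT : MeasurableSet T := measurableSet_toMeasurable _ _
  have hTs : Tᶜ ⊆ s := Set.compl_subset_comm.mp (subset_toMeasurable _ _)
  have hnull : μ (s ∩ T) = 0 := by
    have hsplit : μ (s ∩ T) + μ Tᶜ = μ s := by
      rw [← Set.inter_eq_right.mpr hTs, ← Set.sdiff_eq, measure_inter_add_sdiff s hT]
    have htot : μ sᶜ + μ Tᶜ = μ Set.univ := by
      rw [← measure_toMeasurable sᶜ, measure_add_measure_compl hT]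
    have : μ (s ∩ T) + (μ sᶜ + μ Tᶜ) ≤ 0 + (μ sᶜ + μ Tᶜ) :=
      calc μ (s ∩ T) + (μ sᶜ + μ Tᶜ) = μ s + μ sᶜ := by rw [← hsplit]; ring
        _ ≤ μ Set.univ := h
        _ = 0 + (μ sᶜ + μ Tᶜ) := by rw [zero_add, htot]
    exact nonpos_iff_eq_zero.mp ((ENNReal.add_le_add_iff_right (by finiteness)).mp this)
  have hs : s = Tᶜ ∪ (s ∩ T) := by
    rw [Set.union_inter_distrib_left, Set.union_eq_right.mpr hTs, Set.compl_union_self,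
      Set.inter_univ]
  rw [hs]
  exact hT.compl.nullMeasurableSet.union_null hnull

variable {V : Type*} [Fintype V] {q : V → ℝ}

/-- `X` need not be measurable, so `hX` speaks of outer measures; since the values of `q` add up
to `1`, it still makes every level set of `X` null-measurable. -/
lemma nullMeasurableSet_eq_of_measure_eq_ofReal [IsProbabilityMeasure μ]
    (hq0 : ∀ v, 0 ≤ q v) (hq : ∑ v, q v = 1) {X : Ω → V}
    (hX : ∀ v, μ {ω | X ω = v} = ENNReal.ofReal (q v)) (v : V) :
    NullMeasurableSet {ω | X ω = v} μ := by
  classical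
  refine nullMeasurableSet_of_measure_add_measure_compl_le ?_
  have hcompl : {ω | X ω = v}ᶜ ⊆ ⋃ w ∈ univ.erase v, {ω | X ω = w} := fun ω hω =>
    Set.mem_biUnion (mem_erase.mpr ⟨hω, mem_univ _⟩) rfl
  calc μ {ω | X ω = v} + μ {ω | X ω = v}ᶜ
      ≤ μ {ω | X ω = v} + ∑ w ∈ univ.erase v, μ {ω | X ω = w} :=
        add_le_add_right ((measure_mono hcompl).trans (measure_biUnion_finset_le _ _)) _
    _ = μ Set.univ := by
        rw [add_sum_erase univ (fun w => μ {ω | X ω = w}) (mem_univ v), measure_univ]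
        simp_rw [hX]
        rw [← ENNReal.ofReal_sum_of_nonneg fun w _ => hq0 w, hq, ENNReal.ofReal_one]

lemma integral_comp_eq_sum_measureReal {X : Type*} [Fintype X] [IsFiniteMeasure μ]
    {H : Ω → X} (hH : ∀ x, NullMeasurableSet {ω | H ω = x} μ) (F : X → ℝ) :
    ∫ ω, F (H ω) ∂μ = ∑ x, μ.real {ω | H ω = x} * F x := by
  have hrepr : (fun ω => F (H ω)) = fun ω => ∑ x, {ω | H ω = x}.indicator (fun _ => F x) ω := by
    funext ω
    rw [sum_eq_single (H ω) (fun x _ hx => by simp [Ne.symm hx]) (by simp)]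
    simp
  rw [hrepr, integral_finsetSum _ fun x _ => (integrable_const (F x)).indicator₀ (hH x)]
  simp_rw [integral_indicator₀ (hH _), setIntegral_const, smul_eq_mul]

theorem integral_comp_history_eq_histExp [IsProbabilityMeasure μ] (hq0 : ∀ v, 0 ≤ q v)
    (hq : ∑ v, q v = 1) {ξ : ℕ → Ω → V}
    (hindep : iIndepFun (m := fun _ => (⊤ : MeasurableSpace V)) ξ μ)
    (hξ : ∀ k v, μ {ω | ξ k ω = v} = ENNReal.ofReal (q v)) (k : ℕ) (F : (Fin k → V) → ℝ) :
    ∫ ω, F (fun j => ξ j ω) ∂μ = histExp q k F := by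
  have hfiber : ∀ t : Fin k → V,
      {ω | (fun j : Fin k => ξ j ω) = t} = ⋂ j : Fin k, ξ j ⁻¹' {t j} := by
    intro t; ext ω; simp [funext_iff]
  rw [integral_comp_eq_sum_measureReal fun t => by
    rw [hfiber]
    exact .iInter fun j => nullMeasurableSet_eq_of_measure_eq_ofReal hq0 hq (hξ j) (t j), histExp]
  refine sum_congr rfl fun t _ => ?_
  have hprod := iIndepFun_iff_measure_inter_preimage_eq_mul.mp
    (hindep.precomp Fin.val_injective) univ (sets := fun j => {t j})
    fun _ _ => MeasurableSpace.measurableSet_top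
  simp only [mem_univ, Set.iInter_true] at hprod
  rw [hfiber, measureReal_def, hprod, histWeight, ENNReal.toReal_prod]
  congr 1
  exact prod_congr rfl fun j _ => by
    simp only [Set.preimage, Set.mem_singleton_iff, hξ, ENNReal.toReal_ofReal (hq0 _)]

end Sampling

section MarkovDecisionProcess

variable {S A : Type*} {γ β : ℝ} {P r : S × A → S → ℝ} {d : S × A → ℝ}

noncomputable def sampleProb (P : S × A → S → ℝ) (d : S × A → ℝ) (v : S × A × S) : ℝ :=
  d (v.1, v.2.1) * P (v.1, v.2.1) v.2.2

lemma sampleProb_nonneg (hP0 : ∀ p s', 0 ≤ P p s') (hd0 : ∀ p, 0 ≤ d p) (v : S × A × S) :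
    0 ≤ sampleProb P d v :=
  mul_nonneg (hd0 _) (hP0 _ _)

variable [Fintype A]

noncomputable def tdError (γ β : ℝ) (r : S × A → S → ℝ) (Q : S × A → ℝ) (p : S × A) (s' : S) :
    ℝ :=
  r p s' + γ * logSumExp β (fun b => Q (s', b)) - Q p

variable [Fintype S]

lemma sum_sample_eq_sum_sum (f : S × A × S → ℝ) :
    ∑ v, f v = ∑ p : S × A, ∑ s', f (p.1, p.2, s') := by
  rw [← (Equiv.prodAssoc S A S).sum_comp, Fintype.sum_prod_type]
  rfl

lemma sum_sampleProb (hP1 : ∀ p, ∑ s', P p s' = 1) (hd1 : ∑ p, d p = 1) :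
    ∑ v, sampleProb P d v = 1 := by
  simp only [sum_sample_eq_sum_sum, sampleProb, Prod.mk.eta, ← mul_sum, hP1, mul_one, hd1]

lemma norm_row_le (Q : S × A → ℝ) (s : S) : ‖fun b => Q (s, b)‖ ≤ ‖Q‖ :=
  (pi_norm_le_iff_of_nonneg (norm_nonneg Q)).mpr fun b => norm_le_pi_norm Q (s, b)

lemma sqrt_sum_sq_sub_le {Q₀ Qstar : S × A → ℝ} (hγ0 : 0 ≤ γ) (hγ1 : γ < 1) (hQ₀ : ‖Q₀‖ ≤ 1)
    (hQstar : ‖Qstar‖ ≤ 1 / (1 - γ)) :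
    √(∑ p, (Q₀ p - Qstar p) ^ 2) ≤ 2 * √(Fintype.card S * Fintype.card A : ℝ) / (1 - γ) := by
  have hγ' : 0 < 1 - γ := by linarith
  have hdiff : ‖Q₀ - Qstar‖ ≤ 2 / (1 - γ) := (norm_sub_le _ _).trans <| by
    rw [le_div_iff₀ hγ']
    rw [le_div_iff₀ hγ'] at hQstar
    nlinarith [mul_le_mul_of_nonneg_right hQ₀ hγ'.le]
  calc √(∑ p, (Q₀ p - Qstar p) ^ 2) ≤ √(Fintype.card S * Fintype.card A : ℝ) * ‖Q₀ - Qstar‖ := by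
        simpa [Fintype.card_prod] using sqrt_sum_sq_le_sqrt_card_mul_norm (Q₀ - Qstar)
    _ ≤ √(Fintype.card S * Fintype.card A : ℝ) * (2 / (1 - γ)) := by gcongr
    _ = _ := by ring

variable [Nonempty A]

lemma norm_le_of_bellman (hγ0 : 0 ≤ γ) (hγ1 : γ < 1) (hP0 : ∀ p s', 0 ≤ P p s')
    (hP1 : ∀ p, ∑ s', P p s' = 1) (hr : ∀ p s', |r p s'| ≤ 1) {Qstar : S × A → ℝ}
    (hBell : ∀ p, Qstar p = ∑ s', P p s' * r p s' +
      γ * ∑ s', P p s' * univ.sup' univ_nonempty fun b => Qstar (s', b)) :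
    ‖Qstar‖ ≤ 1 / (1 - γ) := by
  have hfix : ‖Qstar‖ ≤ 1 + γ * ‖Qstar‖ := by
    refine (pi_norm_le_iff_of_nonneg (by positivity)).mpr fun p => ?_
    rw [Real.norm_eq_abs, hBell p]
    refine (abs_add_le _ _).trans (add_le_add (abs_sum_mul_le_of_abs_le (hP0 p) (hP1 p) (hr p)) ?_)
    rw [abs_mul, abs_of_nonneg hγ0]
    gcongr
    exact abs_sum_mul_le_of_abs_le (hP0 p) (hP1 p) fun s' =>
      (abs_sup'_le_norm _).trans (norm_row_le Qstar s')
  rw [le_div_iff₀ (by linarith)]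
  linarith

lemma sum_mul_tdError_eq (hP1 : ∀ p, ∑ s', P p s' = 1) {Qstar : S × A → ℝ}
    (hBell : ∀ p, Qstar p = ∑ s', P p s' * r p s' +
      γ * ∑ s', P p s' * univ.sup' univ_nonempty fun b => Qstar (s', b))
    (Q : S × A → ℝ) (p : S × A) :
    ∑ s', P p s' * tdError γ β r Q p s' = Qstar p - Q p + γ * ∑ s', P p s' *
      (logSumExp β (fun b => Q (s', b)) - univ.sup' univ_nonempty fun b => Qstar (s', b)) := by
  rw [hBell p]
  simp only [tdError, mul_sub, mul_add, sum_sub_distrib, sum_add_distrib, ← sum_mul, hP1,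
    one_mul, mul_left_comm _ γ, ← mul_sum]
  ring

lemma abs_sum_mul_logSumExp_sub_sup'_le (hβ : 0 < β) (hP0 : ∀ p s', 0 ≤ P p s')
    (hP1 : ∀ p, ∑ s', P p s' = 1) (Q Qstar : S × A → ℝ) (p : S × A) :
    |∑ s', P p s' * (logSumExp β (fun b => Q (s', b)) -
      univ.sup' univ_nonempty fun b => Qstar (s', b))| ≤
      ‖Q - Qstar‖ + Real.log (Fintype.card A) / β := by
  refine abs_sum_mul_le_of_abs_le (hP0 p) (hP1 p) fun s' => ?_
  have hsoft : |logSumExp β (fun b => Qstar (s', b)) -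
      univ.sup' univ_nonempty fun b => Qstar (s', b)| ≤ Real.log (Fintype.card A) / β :=
    abs_sub_le_iff.mpr ⟨sub_le_iff_le_add'.mpr (logSumExp_le_sup'_add hβ _),
      (sub_nonpos.mpr (sup'_le_logSumExp hβ _)).trans
        (div_nonneg (Real.log_natCast_nonneg _) hβ.le)⟩
  calc _ ≤ |logSumExp β (fun b => Q (s', b)) - logSumExp β (fun b => Qstar (s', b))| +
        |logSumExp β (fun b => Qstar (s', b)) - univ.sup' univ_nonempty fun b => Qstar (s', b)| :=
        abs_sub_le _ _ _
    _ ≤ ‖Q - Qstar‖ + Real.log (Fintype.card A) / β :=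
        add_le_add ((abs_logSumExp_sub_le hβ _ _).trans (norm_row_le (Q - Qstar) s')) hsoft

lemma abs_reward_add_logSumExp_le (hγ0 : 0 ≤ γ) (hβ : 0 < β) (hr : ∀ p s', |r p s'| ≤ 1)
    (Q : S × A → ℝ) (p : S × A) (s' : S) :
    |r p s' + γ * logSumExp β (fun b => Q (s', b))| ≤
      1 + γ * (‖Q‖ + Real.log (Fintype.card A) / β) := by
  refine (abs_add_le _ _).trans (add_le_add (hr p s') ?_)
  rw [abs_mul, abs_of_nonneg hγ0]
  gcongr
  exact (abs_logSumExp_le hβ _).trans (by gcongr; exact norm_row_le Q s')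

lemma abs_tdError_le (hγ0 : 0 ≤ γ) (hβ : 0 < β) (hr : ∀ p s', |r p s'| ≤ 1) {M : ℝ}
    (hM : 1 + γ * (M + Real.log (Fintype.card A) / β) ≤ M) {Q : S × A → ℝ} (hQ : ‖Q‖ ≤ M)
    (p : S × A) (s' : S) : |tdError γ β r Q p s'| ≤ 2 * M := by
  have htarget := (abs_reward_add_logSumExp_le hγ0 hβ hr Q p s').trans (le_trans (by gcongr) hM)
  have hQp : |Q p| ≤ M := (norm_le_pi_norm Q p).trans hQ
  exact (abs_sub _ _).trans (by linarith)

end MarkovDecisionProcess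

section LSEIteration

variable {S A : Type*} [Fintype A] [DecidableEq S] [DecidableEq A]

noncomputable def sampledResidual (γ β : ℝ) (r : S × A → S → ℝ) (Q : S × A → ℝ)
    (v : S × A × S) (p : S × A) : ℝ :=
  if p = (v.1, v.2.1) then tdError γ β r Q p v.2.2 else 0

noncomputable def lseIter (α γ β : ℝ) (r : S × A → S → ℝ) (Q₀ : S × A → ℝ) :
    (k : ℕ) → (Fin k → S × A × S) → S × A → ℝ
  | 0, _ => Q₀
  | k + 1, t => fun p => lseIter α γ β r Q₀ k (Fin.init t) p +
      α * sampledResidual γ β r (lseIter α γ β r Q₀ k (Fin.init t)) (t (Fin.last k)) p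

variable {α γ β : ℝ} {P r : S × A → S → ℝ} {d : S × A → ℝ} {Q₀ Qstar : S × A → ℝ}

lemma lseIter_snoc {k : ℕ} (t : Fin k → S × A × S) (v : S × A × S) :
    lseIter α γ β r Q₀ (k + 1) (Fin.snoc t v) = fun p =>
      lseIter α γ β r Q₀ k t p + α * sampledResidual γ β r (lseIter α γ β r Q₀ k t) v p := by
  simp [lseIter]

lemma lseIter_history_eq {Ω : Type*} {ξ : ℕ → Ω → S × A × S} {Q : ℕ → Ω → S → A → ℝ}
    (h0 : ∀ ω, (fun p : S × A => Q 0 ω p.1 p.2) = Q₀)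
    (hrec : ∀ k ω s a, Q (k + 1) ω s a = Q k ω s a +
      α * (if (s, a) = ((ξ k ω).1, (ξ k ω).2.1) then (1 : ℝ) else 0) *
        (r ((ξ k ω).1, (ξ k ω).2.1) (ξ k ω).2.2
          + γ * ((1 / β) * Real.log (∑ b, Real.exp (β * Q k ω (ξ k ω).2.2 b)))
          - Q k ω (ξ k ω).1 (ξ k ω).2.1))
    (k : ℕ) (ω : Ω) :
    lseIter α γ β r Q₀ k (fun j => ξ j ω) = fun p => Q k ω p.1 p.2 := by
  induction k with
  | zero => exact (h0 ω).symm
  | succ k ih =>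
    have hsnoc : (fun j : Fin (k + 1) => ξ j ω) = Fin.snoc (fun j : Fin k => ξ j ω) (ξ k ω) := by
      funext j
      refine Fin.lastCases ?_ (fun j => ?_) j <;> simp
    rw [hsnoc, lseIter_snoc, ih]
    funext p
    rw [hrec]
    by_cases hp : p = ((ξ k ω).1, (ξ k ω).2.1)
    · subst hp
      simp [sampledResidual, tdError, logSumExp]
    · simp [sampledResidual, hp]

variable [Fintype S]

noncomputable def lseNoise (α γ β : ℝ) (P r : S × A → S → ℝ) (d : S × A → ℝ) (Q₀ : S × A → ℝ)
    (k : ℕ) (t : Fin k → S × A × S) (v : S × A × S) (p : S × A) : ℝ :=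
  α * (sampledResidual γ β r (lseIter α γ β r Q₀ k t) v p -
    ∑ u, sampleProb P d u * sampledResidual γ β r (lseIter α γ β r Q₀ k t) u p)

noncomputable def comparisonIter (α γ β : ℝ) (P r : S × A → S → ℝ) (d : S × A → ℝ)
    (Q₀ Qstar : S × A → ℝ) : (k : ℕ) → (Fin k → S × A × S) → S × A → ℝ :=
  linearIter (fun p => 1 - α * d p) (Q₀ - Qstar) (lseNoise α γ β P r d Q₀)

lemma sum_sampleProb_mul_sampledResidual (Q : S × A → ℝ) (p : S × A) :
    ∑ v, sampleProb P d v * sampledResidual γ β r Q v p =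
      d p * ∑ s', P p s' * tdError γ β r Q p s' := by
  rw [sum_sample_eq_sum_sum, sum_eq_single p (fun y _ hy => sum_eq_zero fun s' _ => by
    simp [sampledResidual, Ne.symm hy]) (by simp)]
  simp [sampleProb, sampledResidual, mul_sum, mul_assoc]

lemma sum_sampledResidual_sq (Q : S × A → ℝ) (v : S × A × S) :
    ∑ p, sampledResidual γ β r Q v p ^ 2 = tdError γ β r Q (v.1, v.2.1) v.2.2 ^ 2 := by
  simp [sampledResidual, ite_pow]

lemma sum_sampleProb_mul_lseNoise (hP1 : ∀ p, ∑ s', P p s' = 1) (hd1 : ∑ p, d p = 1) (k : ℕ)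
    (t : Fin k → S × A × S) (p : S × A) :
    ∑ v, sampleProb P d v * lseNoise α γ β P r d Q₀ k t v p = 0 := by
  simp only [lseNoise, mul_left_comm _ α, ← mul_sum,
    sum_mul_sub_sum_mul_eq_zero (sum_sampleProb hP1 hd1), mul_zero]

lemma comparisonIter_snoc {k : ℕ} (t : Fin k → S × A × S) (v : S × A × S) :
    comparisonIter α γ β P r d Q₀ Qstar (k + 1) (Fin.snoc t v) = fun p =>
      (1 - α * d p) * comparisonIter α γ β P r d Q₀ Qstar k t p + lseNoise α γ β P r d Q₀ k t v p :=
  linearIter_snoc t v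

variable [Nonempty A]

lemma norm_add_mul_sampledResidual_le (hα0 : 0 ≤ α) (hα1 : α ≤ 1) (hγ0 : 0 ≤ γ) (hβ : 0 < β)
    (hr : ∀ p s', |r p s'| ≤ 1) {M : ℝ} (hM : 1 + γ * (M + Real.log (Fintype.card A) / β) ≤ M)
    {Q : S × A → ℝ} (hQ : ‖Q‖ ≤ M) (v : S × A × S) :
    ‖fun p => Q p + α * sampledResidual γ β r Q v p‖ ≤ M := by
  refine (pi_norm_le_iff_of_nonneg ((norm_nonneg Q).trans hQ)).mpr fun p => ?_
  have hQp : |Q p| ≤ M := (norm_le_pi_norm Q p).trans hQ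
  by_cases hp : p = (v.1, v.2.1)
  · have htarget := (abs_reward_add_logSumExp_le hγ0 hβ hr Q p v.2.2).trans
      (le_trans (by gcongr) hM)
    calc ‖Q p + α * sampledResidual γ β r Q v p‖
        = |(1 - α) * Q p + α * (r p v.2.2 + γ * logSumExp β fun b => Q (v.2.2, b))| := by
          rw [Real.norm_eq_abs, sampledResidual, if_pos hp, tdError]; ring_nf
      _ ≤ (1 - α) * M + α * M := by
          refine (abs_add_le _ _).trans (add_le_add ?_ ?_) <;>
            rw [abs_mul, abs_of_nonneg (by linarith)] <;> gcongr
      _ = M := by ring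
  · simpa [sampledResidual, hp] using hQp

lemma norm_lseIter_le (hα0 : 0 ≤ α) (hα1 : α ≤ 1) (hγ0 : 0 ≤ γ) (hβ : 0 < β)
    (hr : ∀ p s', |r p s'| ≤ 1) {M : ℝ} (hM : 1 + γ * (M + Real.log (Fintype.card A) / β) ≤ M)
    (hQ₀ : ‖Q₀‖ ≤ M) {k : ℕ} (t : Fin k → S × A × S) : ‖lseIter α γ β r Q₀ k t‖ ≤ M := by
  induction k with
  | zero => exact hQ₀
  | succ k ih => exact norm_add_mul_sampledResidual_le hα0 hα1 hγ0 hβ hr hM (ih _) _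

lemma sum_sampleProb_mul_sum_sq_lseNoise_le (hα0 : 0 ≤ α) (hα1 : α ≤ 1) (hγ0 : 0 ≤ γ)
    (hβ : 0 < β) (hP0 : ∀ p s', 0 ≤ P p s') (hP1 : ∀ p, ∑ s', P p s' = 1) (hd0 : ∀ p, 0 ≤ d p)
    (hd1 : ∑ p, d p = 1) (hr : ∀ p s', |r p s'| ≤ 1) {M : ℝ}
    (hM : 1 + γ * (M + Real.log (Fintype.card A) / β) ≤ M) (hQ₀ : ‖Q₀‖ ≤ M) (k : ℕ)
    (t : Fin k → S × A × S) :
    ∑ v, sampleProb P d v * ∑ p, lseNoise α γ β P r d Q₀ k t v p ^ 2 ≤ (α * (2 * M)) ^ 2 := by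
  set Q := lseIter α γ β r Q₀ k t
  have hq := sum_sampleProb hP1 hd1
  calc ∑ v, sampleProb P d v * ∑ p, lseNoise α γ β P r d Q₀ k t v p ^ 2
      = α ^ 2 * ∑ v, sampleProb P d v * ∑ p, (sampledResidual γ β r Q v p -
          ∑ u, sampleProb P d u * sampledResidual γ β r Q u p) ^ 2 := by
        simp only [lseNoise, mul_pow, mul_sum, mul_left_comm _ (α ^ 2)]
        rfl
    _ ≤ α ^ 2 * ∑ v, sampleProb P d v * ∑ p, sampledResidual γ β r Q v p ^ 2 :=
        mul_le_mul_of_nonneg_left (sum_mul_sum_sq_sub_mean_le hq _) (sq_nonneg α)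
    _ ≤ α ^ 2 * ∑ v, sampleProb P d v * (2 * M) ^ 2 := by
        gcongr with v
        · exact sampleProb_nonneg hP0 hd0 v
        rw [sum_sampledResidual_sq, ← sq_abs]
        have hQ := norm_lseIter_le hα0 hα1 hγ0 hβ hr hM hQ₀ t
        have := abs_tdError_le hγ0 hβ hr hM hQ (v.1, v.2.1) v.2.2
        gcongr
    _ = (α * (2 * M)) ^ 2 := by rw [← sum_mul, hq, one_mul]; ring

lemma error_sub_comparisonIter_snoc (hP1 : ∀ p, ∑ s', P p s' = 1)
    (hBell : ∀ p, Qstar p = ∑ s', P p s' * r p s' +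
      γ * ∑ s', P p s' * univ.sup' univ_nonempty fun b => Qstar (s', b))
    {k : ℕ} (t : Fin k → S × A × S) (v : S × A × S) (p : S × A) :
    (lseIter α γ β r Q₀ (k + 1) (Fin.snoc t v) - Qstar -
      comparisonIter α γ β P r d Q₀ Qstar (k + 1) (Fin.snoc t v)) p =
      (1 - α * d p) * (lseIter α γ β r Q₀ k t - Qstar - comparisonIter α γ β P r d Q₀ Qstar k t) p +
      α * d p * γ * ∑ s', P p s' * (logSumExp β (fun b => lseIter α γ β r Q₀ k t (s', b)) -
        univ.sup' univ_nonempty fun b => Qstar (s', b)) := by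
  simp only [Pi.sub_apply, lseIter_snoc, comparisonIter_snoc, lseNoise,
    sum_sampleProb_mul_sampledResidual, sum_mul_tdError_eq hP1 hBell]
  ring

lemma norm_error_sub_comparisonIter_snoc_le (hα0 : 0 ≤ α) (hα1 : α ≤ 1) (hγ0 : 0 ≤ γ)
    (hβ : 0 < β) (hP0 : ∀ p s', 0 ≤ P p s') (hP1 : ∀ p, ∑ s', P p s' = 1) (hd0 : ∀ p, 0 ≤ d p)
    (hd1 : ∑ p, d p = 1)
    (hBell : ∀ p, Qstar p = ∑ s', P p s' * r p s' +
      γ * ∑ s', P p s' * univ.sup' univ_nonempty fun b => Qstar (s', b))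
    {ρ dmax : ℝ} (hρ0 : 0 ≤ ρ) (hρ : ∀ p, 1 - α * d p * (1 - γ) ≤ ρ) (hdmax : ∀ p, d p ≤ dmax)
    {k : ℕ} (t : Fin k → S × A × S) (v : S × A × S) :
    ‖lseIter α γ β r Q₀ (k + 1) (Fin.snoc t v) - Qstar -
        comparisonIter α γ β P r d Q₀ Qstar (k + 1) (Fin.snoc t v)‖ ≤
      ρ * ‖lseIter α γ β r Q₀ k t - Qstar - comparisonIter α γ β P r d Q₀ Qstar k t‖ +
        α * γ * dmax * (‖comparisonIter α γ β P r d Q₀ Qstar k t‖ +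
          Real.log (Fintype.card A) / β) := by
  set x := comparisonIter α γ β P r d Q₀ Qstar k t
  set Δ := lseIter α γ β r Q₀ k t - Qstar - x
  have hL : 0 ≤ Real.log (Fintype.card A) / β := div_nonneg (Real.log_natCast_nonneg _) hβ.le
  obtain ⟨p₀, -⟩ := nonempty_of_sum_ne_zero (s := univ) (f := d) (by rw [hd1]; exact one_ne_zero)
  have hdmax0 : 0 ≤ dmax := (hd0 p₀).trans (hdmax p₀)
  refine (pi_norm_le_iff_of_nonneg (by positivity)).mpr fun p => ?_
  have hdp1 : d p ≤ 1 := (single_le_sum (fun p _ => hd0 p) (mem_univ p)).trans_eq hd1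
  have hαd : α * d p ≤ 1 := by nlinarith [hd0 p]
  have herr : ‖lseIter α γ β r Q₀ k t - Qstar‖ ≤ ‖Δ‖ + ‖x‖ := by
    simpa [Δ] using norm_add_le Δ x
  have hdrift := abs_sum_mul_logSumExp_sub_sup'_le hβ hP0 hP1 (lseIter α γ β r Q₀ k t) Qstar p
  rw [Real.norm_eq_abs, error_sub_comparisonIter_snoc hP1 hBell]
  calc _ ≤ (1 - α * d p) * ‖Δ‖ + α * d p * γ * (‖Δ‖ + ‖x‖ + Real.log (Fintype.card A) / β) := by
        refine (abs_add_le _ _).trans (add_le_add ?_ ?_)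
        · rw [abs_mul, abs_of_nonneg (by linarith)]
          gcongr
          exact norm_le_pi_norm Δ p
        · have hcoef : 0 ≤ α * d p * γ := mul_nonneg (mul_nonneg hα0 (hd0 p)) hγ0
          rw [abs_mul, abs_of_nonneg hcoef]
          exact mul_le_mul_of_nonneg_left (by linarith) hcoef
    _ = (1 - α * d p * (1 - γ)) * ‖Δ‖ + α * γ * d p * (‖x‖ + Real.log (Fintype.card A) / β) := by
        ring
    _ ≤ _ := by
        gcongr
        · exact hρ p
        · exact hdmax p

end LSEIteration

lemma rpow_three_halves {x : ℝ} (hx : 0 ≤ x) : x ^ ((3 : ℝ) / 2) = x * √x := by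
  rw [show (3 : ℝ) / 2 = 1 + 1 / 2 by norm_num, Real.rpow_add' hx (by norm_num), Real.rpow_one,
    Real.sqrt_eq_rpow]

lemma rpow_five_halves {x : ℝ} (hx : 0 ≤ x) : x ^ ((5 : ℝ) / 2) = x ^ 2 * √x := by
  rw [show (5 : ℝ) / 2 = 2 + 1 / 2 by norm_num, Real.rpow_add' hx (by norm_num),
    Real.sqrt_eq_rpow, Real.rpow_two]

lemma noise_terms_le_explicit {α γ β L dmin dmax n ρ : ℝ} (hα0 : 0 < α) (hγ0 : 0 ≤ γ) (hγ1 : γ < 1)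
    (hβ : 0 < β) (hL : 0 ≤ L) (hdmin : 0 < dmin) (hdd : dmin ≤ dmax) (hn : 1 ≤ n)
    (hρ : ρ = 1 - α * dmin * (1 - γ)) (hρ0 : 0 ≤ ρ) :
    α * (2 * ((1 + L / β) / (1 - γ))) / √(1 - ρ ^ 2) * (1 + α * γ * dmax / (1 - ρ)) ≤
      3 * √6 * √α * dmax * (L + β) * n / (β * dmin ^ ((3 : ℝ) / 2) * (1 - γ) ^ ((5 : ℝ) / 2)) := by
  have hγ' : 0 < 1 - γ := by linarith
  have hE0 : 0 < dmin * (1 - γ) := mul_pos hdmin hγ'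
  have h1ρ : 1 - ρ = α * (dmin * (1 - γ)) := by rw [hρ]; ring
  have hsqα := Real.mul_self_sqrt hα0.le
  have hρ1 : ρ < 1 := by nlinarith [mul_pos hα0 hE0]
  have hX : α * (2 * ((1 + L / β) / (1 - γ))) / √(1 - ρ ^ 2) ≤
      2 * √α * ((1 + L / β) / (1 - γ)) / √(dmin * (1 - γ)) := by
    have hsq : √α * √(dmin * (1 - γ)) ≤ √(1 - ρ ^ 2) := by
      rw [← Real.sqrt_mul hα0.le, ← h1ρ]
      exact Real.sqrt_le_sqrt (by nlinarith)
    calc _ ≤ α * (2 * ((1 + L / β) / (1 - γ))) / (√α * √(dmin * (1 - γ))) :=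
          div_le_div_of_nonneg_left (by positivity) (by positivity) hsq
      _ = _ := by
          have := Real.sqrt_pos.mpr hα0
          nth_rewrite 1 [← hsqα]
          field_simp
  have hcoef : 1 + α * γ * dmax / (1 - ρ) ≤ dmax / (dmin * (1 - γ)) := by
    rw [h1ρ, mul_assoc, mul_div_mul_left _ _ hα0.ne', one_add_div hE0.ne',
      div_le_div_iff_of_pos_right hE0]
    nlinarith
  have h6 : (2 : ℝ) ≤ √6 := Real.le_sqrt_of_sq_le (by norm_num)
  have hdmax0 : 0 ≤ dmax := hdmin.le.trans hdd
  rw [rpow_three_halves hdmin.le, rpow_five_halves hγ'.le]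
  calc _ ≤ 2 * √α * ((1 + L / β) / (1 - γ)) / √(dmin * (1 - γ)) * (dmax / (dmin * (1 - γ))) := by
        gcongr
    _ = 2 * (√α * dmax * (L + β) / (β * (dmin * √dmin) * ((1 - γ) ^ 2 * √(1 - γ)))) := by
        rw [Real.sqrt_mul hdmin.le]
        field_simp
        ring
    _ ≤ 3 * √6 * n * (√α * dmax * (L + β) / (β * (dmin * √dmin) * ((1 - γ) ^ 2 * √(1 - γ)))) :=
        mul_le_mul_of_nonneg_right (by nlinarith) (div_nonneg (by positivity) (by positivity))
    _ = _ := by ring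

lemma comparison_bound_le_explicit {α γ β L dmin dmax n ρ m : ℝ} (k : ℕ) (hα0 : 0 < α)
    (hγ0 : 0 ≤ γ) (hγ1 : γ < 1) (hβ : 0 < β) (hL : 0 ≤ L) (hdmin : 0 < dmin)
    (hdd : dmin ≤ dmax) (hdmax1 : dmax ≤ 1) (hn : 1 ≤ n) (hρ : ρ = 1 - α * dmin * (1 - γ))
    (hρ0 : 0 ≤ ρ) (hm : m ≤ 2 * √n / (1 - γ)) :
    (ρ ^ k * m + α * (2 * ((1 + L / β) / (1 - γ))) / √(1 - ρ ^ 2)) +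
      (α * γ * dmax * m * k * ρ ^ (k - 1) + α * γ * dmax *
        (α * (2 * ((1 + L / β) / (1 - γ))) / √(1 - ρ ^ 2) + L / β) / (1 - ρ)) ≤
    3 * √6 * √α * dmax * (L + β) * n / (β * dmin ^ ((3 : ℝ) / 2) * (1 - γ) ^ ((5 : ℝ) / 2))
      + 4 * α * γ * dmax * n ^ ((3 : ℝ) / 2) * k * ρ ^ (k - 1) / (1 - γ)
      + L / (β * dmin * (1 - γ))
      + 2 * n ^ ((3 : ℝ) / 2) * ρ ^ k / (1 - γ) := by
  set X := α * (2 * ((1 + L / β) / (1 - γ))) / √(1 - ρ ^ 2)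
  have hγ' : 0 < 1 - γ := by linarith
  have h1ρ : 1 - ρ = α * (dmin * (1 - γ)) := by rw [hρ]; ring
  have hdmax0 : 0 ≤ dmax := hdmin.le.trans hdd
  have hm' : m ≤ 2 * n ^ ((3 : ℝ) / 2) / (1 - γ) := by
    refine hm.trans (by
      gcongr
      rw [rpow_three_halves (by linarith)]
      nlinarith [Real.sqrt_nonneg n])
  have hnoise :=
    noise_terms_le_explicit (dmax := dmax) (n := n) hα0 hγ0 hγ1 hβ hL hdmin hdd hn hρ hρ0
  have hT4 : ρ ^ k * m ≤ 2 * n ^ ((3 : ℝ) / 2) * ρ ^ k / (1 - γ) := by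
    calc ρ ^ k * m ≤ ρ ^ k * (2 * n ^ ((3 : ℝ) / 2) / (1 - γ)) := by gcongr
      _ = _ := by ring
  have hT2 : α * γ * dmax * m * k * ρ ^ (k - 1) ≤
      4 * α * γ * dmax * n ^ ((3 : ℝ) / 2) * k * ρ ^ (k - 1) / (1 - γ) := by
    have hn32 : 0 ≤ n ^ ((3 : ℝ) / 2) := by positivity
    calc α * γ * dmax * m * k * ρ ^ (k - 1) ≤
        α * γ * dmax * (4 * n ^ ((3 : ℝ) / 2) / (1 - γ)) * k * ρ ^ (k - 1) := by
          gcongr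
          exact hm'.trans (by gcongr; norm_num)
      _ = _ := by ring
  have hT3 : α * γ * dmax * (L / β) / (1 - ρ) ≤ L / (β * dmin * (1 - γ)) := by
    rw [h1ρ, show α * γ * dmax * (L / β) / (α * (dmin * (1 - γ))) =
      γ * dmax * (L / (β * dmin * (1 - γ))) by field_simp]
    exact mul_le_of_le_one_left (by positivity) (by nlinarith)
  have hsplit : α * γ * dmax * (X + L / β) / (1 - ρ) =
      X * (α * γ * dmax / (1 - ρ)) + α * γ * dmax * (L / β) / (1 - ρ) := by ring
  rw [hsplit]
  rw [mul_add, mul_one] at hnoise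
  linarith

section Expectations

variable {S A : Type*} [Fintype S] [Fintype A] [Nonempty A] [DecidableEq S] [DecidableEq A]
  {α γ β : ℝ} {P r : S × A → S → ℝ} {d : S × A → ℝ} {Q₀ Qstar : S × A → ℝ} {ρ M : ℝ}

lemma histExp_norm_comparisonIter_le (hα0 : 0 ≤ α) (hα1 : α ≤ 1) (hγ0 : 0 ≤ γ) (hβ : 0 < β)
    (hP0 : ∀ p s', 0 ≤ P p s') (hP1 : ∀ p, ∑ s', P p s' = 1) (hd0 : ∀ p, 0 ≤ d p)
    (hd1 : ∑ p, d p = 1) (hr : ∀ p s', |r p s'| ≤ 1)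
    (hM : 1 + γ * (M + Real.log (Fintype.card A) / β) ≤ M) (hQ₀ : ‖Q₀‖ ≤ M)
    (hρ0 : 0 ≤ ρ) (hρ1 : ρ < 1) (hρ : ∀ p, 1 - α * d p * (1 - γ) ≤ ρ) (k : ℕ) :
    histExp (sampleProb P d) k (fun t => ‖comparisonIter α γ β P r d Q₀ Qstar k t‖) ≤
      ρ ^ k * √(∑ p, (Q₀ p - Qstar p) ^ 2) + α * (2 * M) / √(1 - ρ ^ 2) := by
  have hcoef : ∀ p, |1 - α * d p| ≤ ρ := fun p => by
    have hdp1 : d p ≤ 1 := (single_le_sum (fun p _ => hd0 p) (mem_univ p)).trans_eq hd1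
    have := hρ p
    rw [abs_of_nonneg (by nlinarith [hd0 p])]
    nlinarith [mul_nonneg (mul_nonneg hα0 (hd0 p)) hγ0]
  exact histExp_norm_linearIter_le (sampleProb_nonneg hP0 hd0) (sum_sampleProb hP1 hd1) hρ0 hρ1
    hcoef (sum_sampleProb_mul_lseNoise hP1 hd1)
    (sum_sampleProb_mul_sum_sq_lseNoise_le hα0 hα1 hγ0 hβ hP0 hP1 hd0 hd1 hr hM hQ₀)
    (by have := (norm_nonneg _).trans hQ₀; positivity) k

lemma histExp_norm_error_sub_comparisonIter_le (hα0 : 0 ≤ α) (hα1 : α ≤ 1) (hγ0 : 0 ≤ γ)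
    (hβ : 0 < β) (hP0 : ∀ p s', 0 ≤ P p s') (hP1 : ∀ p, ∑ s', P p s' = 1) (hd0 : ∀ p, 0 ≤ d p)
    (hd1 : ∑ p, d p = 1)
    (hBell : ∀ p, Qstar p = ∑ s', P p s' * r p s' +
      γ * ∑ s', P p s' * univ.sup' univ_nonempty fun b => Qstar (s', b))
    {dmax m X : ℝ} (hρ0 : 0 ≤ ρ) (hρ1 : ρ < 1) (hρ : ∀ p, 1 - α * d p * (1 - γ) ≤ ρ)
    (hdmax : ∀ p, d p ≤ dmax) (hX : 0 ≤ X)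
    (hx : ∀ k, histExp (sampleProb P d) k (fun t => ‖comparisonIter α γ β P r d Q₀ Qstar k t‖) ≤
      ρ ^ k * m + X) (k : ℕ) :
    histExp (sampleProb P d) k
        (fun t => ‖lseIter α γ β r Q₀ k t - Qstar - comparisonIter α γ β P r d Q₀ Qstar k t‖) ≤
      α * γ * dmax * m * k * ρ ^ (k - 1) +
        α * γ * dmax * (X + Real.log (Fintype.card A) / β) / (1 - ρ) := by
  have hq0 := sampleProb_nonneg hP0 hd0
  have hq := sum_sampleProb hP1 hd1
  obtain ⟨p₀, -⟩ := nonempty_of_sum_ne_zero (s := univ) (f := d) (by rw [hd1]; exact one_ne_zero)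
  have hc : 0 ≤ α * γ * dmax := by have := (hd0 p₀).trans (hdmax p₀); positivity
  have hL : 0 ≤ Real.log (Fintype.card A) / β := div_nonneg (Real.log_natCast_nonneg _) hβ.le
  refine le_of_le_mul_add_pow_add (m := α * γ * dmax * m)
    (δ := fun k => histExp (sampleProb P d) k fun t =>
      ‖lseIter α γ β r Q₀ k t - Qstar - comparisonIter α γ β P r d Q₀ Qstar k t‖)
    hρ0 hρ1 (by positivity) ?_ (fun k => ?_) k
  · refine (histExp_mono hq0 (G := fun _ => 0) fun t => ?_).trans (histExp_const hq 0).le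
    simp [lseIter, comparisonIter, linearIter]
  · rw [histExp_succ]
    calc _ ≤ histExp (sampleProb P d) k fun t =>
          ρ * ‖lseIter α γ β r Q₀ k t - Qstar - comparisonIter α γ β P r d Q₀ Qstar k t‖ +
            α * γ * dmax * ‖comparisonIter α γ β P r d Q₀ Qstar k t‖ +
            α * γ * dmax * (Real.log (Fintype.card A) / β) := by
          refine histExp_mono hq0 fun t => ?_
          calc _ ≤ ∑ v, sampleProb P d v * (ρ *
                ‖lseIter α γ β r Q₀ k t - Qstar - comparisonIter α γ β P r d Q₀ Qstar k t‖ +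
                α * γ * dmax * (‖comparisonIter α γ β P r d Q₀ Qstar k t‖ +
                  Real.log (Fintype.card A) / β)) :=
                sum_le_sum fun v _ => mul_le_mul_of_nonneg_left
                  (norm_error_sub_comparisonIter_snoc_le hα0 hα1 hγ0 hβ hP0 hP1 hd0 hd1 hBell
                    hρ0 hρ hdmax t v) (hq0 v)
            _ = _ := by rw [← sum_mul, hq, one_mul]; ring
      _ ≤ _ := by
          rw [histExp_add, histExp_add, histExp_const_mul, histExp_const_mul, histExp_const hq]
          linarith [mul_le_mul_of_nonneg_left (hx k) hc]

theorem histExp_norm_lseIter_sub_le {dmax : ℝ} (hα0 : 0 ≤ α) (hα1 : α ≤ 1) (hγ0 : 0 ≤ γ)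
    (hβ : 0 < β)
    (hP0 : ∀ p s', 0 ≤ P p s') (hP1 : ∀ p, ∑ s', P p s' = 1) (hd0 : ∀ p, 0 ≤ d p)
    (hd1 : ∑ p, d p = 1) (hr : ∀ p s', |r p s'| ≤ 1)
    (hBell : ∀ p, Qstar p = ∑ s', P p s' * r p s' +
      γ * ∑ s', P p s' * univ.sup' univ_nonempty fun b => Qstar (s', b))
    (hM : 1 + γ * (M + Real.log (Fintype.card A) / β) ≤ M) (hQ₀ : ‖Q₀‖ ≤ M)
    (hρ0 : 0 ≤ ρ) (hρ1 : ρ < 1) (hρ : ∀ p, 1 - α * d p * (1 - γ) ≤ ρ) (hdmax : ∀ p, d p ≤ dmax)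
    (k : ℕ) :
    histExp (sampleProb P d) k (fun t => ‖lseIter α γ β r Q₀ k t - Qstar‖) ≤
      (ρ ^ k * √(∑ p, (Q₀ p - Qstar p) ^ 2) + α * (2 * M) / √(1 - ρ ^ 2)) +
      (α * γ * dmax * √(∑ p, (Q₀ p - Qstar p) ^ 2) * k * ρ ^ (k - 1) +
        α * γ * dmax * (α * (2 * M) / √(1 - ρ ^ 2) + Real.log (Fintype.card A) / β) / (1 - ρ)) := by
  have hx := histExp_norm_comparisonIter_le (Qstar := Qstar) hα0 hα1 hγ0 hβ hP0 hP1 hd0 hd1 hr hM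
    hQ₀ hρ0 hρ1 hρ
  rw [add_comm]
  refine (histExp_mono (sampleProb_nonneg hP0 hd0) fun t => ?_).trans
    ((histExp_add _ _).trans_le (add_le_add
      (histExp_norm_error_sub_comparisonIter_le hα0 hα1 hγ0 hβ hP0 hP1 hd0 hd1 hBell hρ0 hρ1 hρ
        hdmax (by have := (norm_nonneg _).trans hQ₀; positivity) hx k) (hx k)))
  simpa using norm_add_le (lseIter α γ β r Q₀ k t - Qstar - comparisonIter α γ β P r d Q₀ Qstar k t)
    (comparisonIter α γ β P r d Q₀ Qstar k t)

variable [Nonempty S]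

theorem histExp_norm_lseIter_sub_le_explicit (hα : α ∈ Set.Ioo (0 : ℝ) 1)
    (hγ : γ ∈ Set.Ico (0 : ℝ) 1) (hβ : 0 < β)
    (hP0 : ∀ p s', 0 ≤ P p s') (hP1 : ∀ p, ∑ s', P p s' = 1) (hd0 : ∀ p, 0 < d p)
    (hd1 : ∑ p, d p = 1) (hr : ∀ p s', |r p s'| ≤ 1)
    (hBell : ∀ p, Qstar p = ∑ s', P p s' * r p s' +
      γ * ∑ s', P p s' * univ.sup' univ_nonempty fun b => Qstar (s', b))
    (hQ₀ : ‖Q₀‖ ≤ 1) {dmin dmax n : ℝ} (hdmin : dmin = univ.inf' univ_nonempty d)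
    (hdmax : dmax = univ.sup' univ_nonempty d) (hρ : ρ = 1 - α * dmin * (1 - γ))
    (hn : n = (Fintype.card S * Fintype.card A : ℝ)) (k : ℕ) :
    histExp (sampleProb P d) k (fun t => ‖lseIter α γ β r Q₀ k t - Qstar‖) ≤
      3 * √6 * √α * dmax * (Real.log (Fintype.card A) + β) * n
          / (β * dmin ^ ((3 : ℝ) / 2) * (1 - γ) ^ ((5 : ℝ) / 2))
        + 4 * α * γ * dmax * n ^ ((3 : ℝ) / 2) * k * ρ ^ (k - 1) / (1 - γ)
        + Real.log (Fintype.card A) / (β * dmin * (1 - γ))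
        + 2 * n ^ ((3 : ℝ) / 2) * ρ ^ k / (1 - γ) := by
  obtain ⟨hα0, hα1⟩ := hα
  obtain ⟨hγ0, hγ1⟩ := hγ
  have hdmin0 : 0 < dmin := hdmin ▸ (lt_inf'_iff _).mpr fun p _ => hd0 p
  have hdmin_le : ∀ p, dmin ≤ d p := fun p => hdmin ▸ inf'_le _ (mem_univ p)
  have hdmax_ge : ∀ p, d p ≤ dmax := fun p => hdmax ▸ le_sup' d (mem_univ p)
  have hdd : dmin ≤ dmax := (hdmin_le (Classical.arbitrary _)).trans (hdmax_ge _)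
  have hdmax1 : dmax ≤ 1 := hdmax ▸ sup'_le _ _ fun p _ =>
    (single_le_sum (fun q _ => (hd0 q).le) (mem_univ p)).trans_eq hd1
  have hρ0 : 0 ≤ ρ := by nlinarith [mul_le_mul hα1.le (hdd.trans hdmax1) hdmin0.le zero_le_one]
  have hρ1 : ρ < 1 := by nlinarith [mul_pos (mul_pos hα0 hdmin0) (sub_pos.mpr hγ1)]
  have hρ_ge : ∀ p, 1 - α * d p * (1 - γ) ≤ ρ := fun p => by
    nlinarith [mul_le_mul_of_nonneg_left (hdmin_le p) hα0.le]
  have hn1 : 1 ≤ n := hn ▸ one_le_mul_of_one_le_of_one_le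
    (Nat.one_le_cast.mpr Fintype.card_pos) (Nat.one_le_cast.mpr Fintype.card_pos)
  have hL := Real.log_natCast_nonneg (Fintype.card A)
  have hLβ : 0 ≤ Real.log (Fintype.card A) / β := div_nonneg hL hβ.le
  set M := (1 + Real.log (Fintype.card A) / β) / (1 - γ)
  have hγM : (1 - γ) * M = 1 + Real.log (Fintype.card A) / β := mul_div_cancel₀ _ (by linarith)
  have hM1 : 1 ≤ M := by nlinarith
  have hM : 1 + γ * (M + Real.log (Fintype.card A) / β) ≤ M := by nlinarith
  refine (histExp_norm_lseIter_sub_le hα0.le hα1.le hγ0 hβ hP0 hP1 (fun p => (hd0 p).le) hd1 hr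
    hBell hM (hQ₀.trans hM1) hρ0 hρ1 hρ_ge hdmax_ge k).trans ?_
  exact comparison_bound_le_explicit k hα0 hγ0 hγ1 hβ hL hdmin0 hdd hdmax1 hn1 hρ hρ0
    (hn ▸ sqrt_sum_sq_sub_le hγ0 hγ1 hQ₀ (norm_le_of_bellman hγ0 hγ1 hP0 hP1 hr hBell))

end Expectations

end SoftQLearning

open SoftQLearning in
/-- **Finite-time error bound of LSE soft Q-learning** (Theorem on the LSE iterates):
`E[‖Q_k^{LSE} − Q*‖_∞] ≤ 3√6·α^{1/2}·d_max·(log|A|+β)·n/(β·d_min^{3/2}·(1−γ)^{5/2})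
 + 4·α·γ·d_max·n^{3/2}·k·ρ^{k−1}/(1−γ) + log|A|/(β·d_min·(1−γ)) + 2·n^{3/2}·ρ^k/(1−γ)`. -/
theorem lse_soft_q_learning_finite_time_bound {S A : Type*} [Fintype S] [Fintype A]
    [Nonempty S] [Nonempty A] [DecidableEq S] [DecidableEq A]
    {Ω : Type*} [MeasurableSpace Ω] (μ : Measure Ω) [IsProbabilityMeasure μ]
    (α γ β : ℝ) (hα : α ∈ Set.Ioo (0 : ℝ) 1) (hγ : γ ∈ Set.Ico (0 : ℝ) 1) (hβ : 0 < β)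
    (P : S → A → S → ℝ) (hP0 : ∀ s a s', 0 ≤ P s a s') (hP1 : ∀ s a, ∑ s', P s a s' = 1)
    (r : S → A → S → ℝ) (hr : ∀ s a s', |r s a s'| ≤ 1)
    (d : S → A → ℝ) (hd0 : ∀ s a, 0 < d s a) (hd1 : ∑ p : S × A, d p.1 p.2 = 1)
    (dmin : ℝ)
    (hdmin : dmin = Finset.univ.inf' Finset.univ_nonempty fun p : S × A => d p.1 p.2)
    (dmax : ℝ)
    (hdmax : dmax = Finset.univ.sup' Finset.univ_nonempty fun p : S × A => d p.1 p.2)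
    (ρ : ℝ) (hρ : ρ = 1 - α * dmin * (1 - γ))
    (nR : ℝ) (hn : nR = (Fintype.card S * Fintype.card A : ℝ))
    (Qstar : S → A → ℝ)
    (hBell : ∀ s a, Qstar s a = (∑ s', P s a s' * r s a s') + γ * ∑ s', P s a s' *
      (Finset.univ.sup' Finset.univ_nonempty fun b => Qstar s' b))
    (ξ : ℕ → Ω → S × A × S)
    (hindep : iIndepFun (m := fun _ : ℕ => (⊤ : MeasurableSpace (S × A × S))) ξ μ)
    (hdist : ∀ k s a s', μ {ω | ξ k ω = (s, a, s')} = ENNReal.ofReal (d s a * P s a s'))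
    (QLSE : ℕ → Ω → S → A → ℝ) (Q0 : S → A → ℝ) (hQ0bd : ∀ s a, |Q0 s a| ≤ 1)
    (hQLSE0 : ∀ ω, QLSE 0 ω = Q0)
    (hQLSErec : ∀ k ω s a, QLSE (k + 1) ω s a = QLSE k ω s a +
      α * (if (s, a) = ((ξ k ω).1, (ξ k ω).2.1) then (1 : ℝ) else 0) *
        (r (ξ k ω).1 (ξ k ω).2.1 (ξ k ω).2.2
          + γ * ((1 / β) * Real.log (∑ b, Real.exp (β * QLSE k ω (ξ k ω).2.2 b)))
          - QLSE k ω (ξ k ω).1 (ξ k ω).2.1)) :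
    ∀ k, ∫ ω, (Finset.univ.sup' Finset.univ_nonempty
        fun p : S × A => |QLSE k ω p.1 p.2 - Qstar p.1 p.2|) ∂μ ≤
      3 * Real.sqrt 6 * Real.sqrt α * dmax * (Real.log (Fintype.card A) + β) * nR
          / (β * dmin ^ ((3 : ℝ) / 2) * (1 - γ) ^ ((5 : ℝ) / 2))
        + 4 * α * γ * dmax * nR ^ ((3 : ℝ) / 2) * (k : ℝ) * ρ ^ (k - 1) / (1 - γ)
        + Real.log (Fintype.card A) / (β * dmin * (1 - γ))
        + 2 * nR ^ ((3 : ℝ) / 2) * ρ ^ k / (1 - γ) := by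
  intro k
  have hiter : ∀ ω, univ.sup' univ_nonempty (fun p : S × A => |QLSE k ω p.1 p.2 - Qstar p.1 p.2|) =
      ‖lseIter α γ β (fun p => r p.1 p.2) (fun p => Q0 p.1 p.2) k (fun j => ξ j ω) -
        fun p => Qstar p.1 p.2‖ := fun ω => by
    rw [lseIter_history_eq (fun ω => by rw [hQLSE0]) hQLSErec, ← sup'_abs_eq_norm]
    rfl
  simp_rw [hiter]
  rw [integral_comp_history_eq_histExp
    (q := sampleProb (fun p : S × A => P p.1 p.2) fun p => d p.1 p.2)
    (sampleProb_nonneg (fun p => hP0 p.1 p.2) fun p => (hd0 p.1 p.2).le)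
    (sum_sampleProb (fun p => hP1 p.1 p.2) hd1) hindep (fun k v => hdist k v.1 v.2.1 v.2.2) k
    fun t => ‖lseIter α γ β (fun p : S × A => r p.1 p.2) (fun p => Q0 p.1 p.2) k t -
      fun p : S × A => Qstar p.1 p.2‖]
  exact histExp_norm_lseIter_sub_le_explicit hα hγ hβ (fun p => hP0 p.1 p.2) (fun p => hP1 p.1 p.2)
    (fun p => hd0 p.1 p.2) hd1 (fun p => hr p.1 p.2) (fun p => hBell p.1 p.2)
    ((pi_norm_le_iff_of_nonneg zero_le_one).mpr fun p => hQ0bd p.1 p.2) hdmin hdmax hρ hn k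
end
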